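/- arXiv:2306.01503 — 8 statements merged into one kernel-verified Lean document; each statement's English description precedes it below -/
import Mathlib

section
/- Let p ≥ 1, let P be a Borel probability measure on ℝ^d with finite p-th moment, and let k > 0. Then the quasi-sure no-arbitrage condition NA(B_k(P)) holds: for every w ∈ ℝ^d, if ⟨w, x⟩ ≥ 0 for Q-almost every x ∈ ℝ^d for all Q ∈ B_k(P), then ⟨w, x⟩ = 0 for Q-almost every x for all Q ∈ B_k(P) (equivalently, w = 0). -/
open MeasureTheory Filter
open scoped ENNReal

noncomputable section

abbrev Evec (d : ℕ) : Type := EuclideanSpace ℝ (Fin d)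

def couplings {d : ℕ} (P Q : Measure (Evec d)) : Set (Measure (Evec d × Evec d)) :=
  {π | IsProbabilityMeasure π ∧ π.map Prod.fst = P ∧ π.map Prod.snd = Q}

noncomputable def Wdist {d : ℕ} (p : ℝ) (P Q : Measure (Evec d)) : ℝ≥0∞ :=
  ⨅ π ∈ couplings P Q, (∫⁻ z, (‖z.1 - z.2‖₊ : ℝ≥0∞) ^ p ∂π) ^ (1 / p)

def wBall {d : ℕ} (p k : ℝ) (P : Measure (Evec d)) : Set (Measure (Evec d)) :=
  {Q | IsProbabilityMeasure Q ∧ (∫⁻ x, (‖x‖₊ : ℝ≥0∞) ^ p ∂Q) < ⊤ ∧ Wdist p P Q ≤ ENNReal.ofReal k}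

/-! If `w ≠ 0`, move a small fraction `t` of the mass of `P` to the point `-w` and leave the rest
in place. Since `P` has a finite `p`-th moment, this transport costs `t * ∫ ‖x + w‖ ^ p dP`, which
is at most `k ^ p` for `t` small, so the new measure lies in the ball; yet it charges `-w`, where
`⟪w, -w⟫ = -‖w‖² < 0`. -/

lemma lintegral_nnnorm_sub_rpow_lt_top {E : Type*} [NormedAddCommGroup E] [MeasurableSpace E]
    {μ : Measure E} [IsFiniteMeasure μ] {p : ℝ} (hp : 0 ≤ p)
    (hμ : ∫⁻ x, (‖x‖₊ : ℝ≥0∞) ^ p ∂μ < ⊤) (y : E) :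
    ∫⁻ x, (‖x - y‖₊ : ℝ≥0∞) ^ p ∂μ < ⊤ := by
  set c := ENNReal.LpAddConst (ENNReal.ofReal p)⁻¹
  have hc : c < ⊤ := ENNReal.LpAddConst_lt_top _
  calc ∫⁻ x, (‖x - y‖₊ : ℝ≥0∞) ^ p ∂μ
      ≤ ∫⁻ x, c * ((‖x‖₊ : ℝ≥0∞) ^ p + (‖y‖₊ : ℝ≥0∞) ^ p) ∂μ := by
        refine lintegral_mono fun x => (ENNReal.rpow_le_rpow ?_ hp).trans
          (ENNReal.rpow_add_le_mul_rpow_add_rpow' _ _ hp)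
        exact_mod_cast nnnorm_sub_le x y
    _ = c * (∫⁻ x, (‖x‖₊ : ℝ≥0∞) ^ p ∂μ + (‖y‖₊ : ℝ≥0∞) ^ p * μ Set.univ) := by
        rw [lintegral_const_mul' _ _ hc.ne, lintegral_add_right _ measurable_const, lintegral_const]
    _ < ⊤ := by
        have hy : (‖y‖₊ : ℝ≥0∞) ^ p < ⊤ := ENNReal.rpow_lt_top_of_nonneg hp ENNReal.coe_ne_top
        exact ENNReal.mul_lt_top hc
          (ENNReal.add_lt_top.2 ⟨hμ, ENNReal.mul_lt_top hy (measure_lt_top μ _)⟩)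

section DiracMix

variable {α : Type*} [MeasurableSpace α]

def diracMix (μ : Measure α) (y : α) (t : ℝ≥0∞) : Measure α :=
  (1 - t) • μ + t • Measure.dirac y

lemma isProbabilityMeasure_diracMix (μ : Measure α) [IsProbabilityMeasure μ] (y : α) {t : ℝ≥0∞}
    (ht : t ≤ 1) : IsProbabilityMeasure (diracMix μ y t) :=
  ⟨by simp [diracMix, tsub_add_cancel_of_le ht]⟩

lemma self_of_ae_diracMix [MeasurableSingletonClass α] {μ : Measure α} {y : α} {t : ℝ≥0∞}
    (ht : t ≠ 0) {q : α → Prop} (h : ∀ᵐ x ∂diracMix μ y t, q x) : q y := by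
  rw [diracMix, ae_add_measure_iff, Measure.ae_ennreal_smul_measure_iff ht, ae_dirac_eq] at h
  exact h.2

lemma lintegral_nnnorm_rpow_diracMix_lt_top {E : Type*} [NormedAddCommGroup E] [MeasurableSpace E]
    [MeasurableSingletonClass E] {μ : Measure E} {p : ℝ} (hp : 0 ≤ p)
    (hμ : ∫⁻ x, (‖x‖₊ : ℝ≥0∞) ^ p ∂μ < ⊤) (y : E) {t : ℝ≥0∞} (ht : t ≠ ⊤) :
    ∫⁻ x, (‖x‖₊ : ℝ≥0∞) ^ p ∂diracMix μ y t < ⊤ := by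
  rw [diracMix, lintegral_add_measure, lintegral_smul_measure, lintegral_smul_measure,
    lintegral_dirac]
  exact ENNReal.add_lt_top.2 ⟨ENNReal.mul_lt_top (tsub_le_self.trans_lt ENNReal.one_lt_top) hμ,
    ENNReal.mul_lt_top ht.lt_top (ENNReal.rpow_lt_top_of_nonneg hp ENNReal.coe_ne_top)⟩

end DiracMix

section DiracMixPlan

variable {d : ℕ} (P : Measure (Evec d)) (y : Evec d)

def diracMixPlan (t : ℝ≥0∞) : Measure (Evec d × Evec d) :=
  (1 - t) • P.map (fun x => (x, x)) + t • P.map (fun x => (x, y))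

lemma diracMixPlan_mem_couplings [IsProbabilityMeasure P] {t : ℝ≥0∞} (ht : t ≤ 1) :
    diracMixPlan P y t ∈ couplings P (diracMix P y t) := by
  have hdiag : Measurable (fun x : Evec d => (x, x)) := measurable_id.prodMk measurable_id
  have hy : Measurable (fun x : Evec d => (x, y)) := measurable_id.prodMk measurable_const
  have hfst : (diracMixPlan P y t).map Prod.fst = P := by
    rw [diracMixPlan, Measure.map_add _ _ measurable_fst, Measure.map_smul, Measure.map_smul,
      Measure.map_map measurable_fst hdiag, Measure.map_map measurable_fst hy]
    simp only [Function.comp_def, Measure.map_id', ← add_smul, tsub_add_cancel_of_le ht, one_smul]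
  have hsnd : (diracMixPlan P y t).map Prod.snd = diracMix P y t := by
    rw [diracMixPlan, Measure.map_add _ _ measurable_snd, Measure.map_smul, Measure.map_smul,
      Measure.map_map measurable_snd hdiag, Measure.map_map measurable_snd hy]
    simp only [Function.comp_def, Measure.map_id', Measure.map_const, measure_univ, one_smul,
      diracMix]
  have hprob : IsProbabilityMeasure ((diracMixPlan P y t).map Prod.fst) := by
    rw [hfst]; infer_instance
  exact ⟨(Measure.isProbabilityMeasure_map_iff measurable_fst.aemeasurable).1 hprob, hfst, hsnd⟩

lemma lintegral_cost_diracMixPlan (t : ℝ≥0∞) {p : ℝ} (hp : 0 < p) :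
    ∫⁻ z, (‖z.1 - z.2‖₊ : ℝ≥0∞) ^ p ∂diracMixPlan P y t = t * ∫⁻ x, (‖x - y‖₊ : ℝ≥0∞) ^ p ∂P := by
  have hcost : Measurable (fun z : Evec d × Evec d => (‖z.1 - z.2‖₊ : ℝ≥0∞) ^ p) := by fun_prop
  rw [diracMixPlan, lintegral_add_measure, lintegral_smul_measure, lintegral_smul_measure,
    lintegral_map hcost (by fun_prop), lintegral_map hcost (by fun_prop)]
  simp [ENNReal.zero_rpow_of_pos hp]

end DiracMixPlan

lemma Wdist_le_of_mem_couplings {d : ℕ} {p : ℝ} {P Q : Measure (Evec d)}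
    {π : Measure (Evec d × Evec d)} (hπ : π ∈ couplings P Q) :
    Wdist p P Q ≤ (∫⁻ z, (‖z.1 - z.2‖₊ : ℝ≥0∞) ^ p ∂π) ^ (1 / p) :=
  iInf₂_le π hπ

lemma exists_diracMix_mem_wBall {d : ℕ} {p k : ℝ} (hp : 0 < p) (hk : 0 < k)
    (P : Measure (Evec d)) [IsProbabilityMeasure P]
    (hmom : (∫⁻ x, (‖x‖₊ : ℝ≥0∞) ^ p ∂P) < ⊤) (y : Evec d) :
    ∃ t, 0 < t ∧ diracMix P y t ∈ wBall p k P := by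
  set C := ∫⁻ x, (‖x - y‖₊ : ℝ≥0∞) ^ p ∂P
  have hC : C < ⊤ := lintegral_nnnorm_sub_rpow_lt_top hp.le hmom y
  have hk' : ENNReal.ofReal k ^ p ≠ 0 :=
    (ENNReal.rpow_pos (ENNReal.ofReal_pos.2 hk) ENNReal.ofReal_ne_top).ne'
  obtain ⟨c, hc0, hcC⟩ := ENNReal.exists_pos_mul_lt hC.ne hk'
  have ht : min c 1 ≤ 1 := min_le_right _ _
  refine ⟨min c 1, lt_min hc0 one_pos, isProbabilityMeasure_diracMix P y ht,
    lintegral_nnnorm_rpow_diracMix_lt_top hp.le hmom y (ht.trans_lt ENNReal.one_lt_top).ne, ?_⟩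
  calc Wdist p P (diracMix P y (min c 1)) ≤ (min c 1 * C) ^ (1 / p) := by
        rw [← lintegral_cost_diracMixPlan P y _ hp]
        exact Wdist_le_of_mem_couplings (diracMixPlan_mem_couplings P y ht)
    _ ≤ (ENNReal.ofReal k ^ p) ^ (1 / p) :=
        ENNReal.rpow_le_rpow ((mul_le_mul_left (min_le_left _ _) C).trans hcC.le) (by positivity)
    _ = ENNReal.ofReal k := by rw [← ENNReal.rpow_mul, mul_one_div_cancel hp.ne', ENNReal.rpow_one]

/-- the quasi-sure no-arbitrage condition `NA(B_k(P))` holds. -/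
theorem na_wasserstein_ball {d : ℕ} (p k : ℝ) (hp : 1 ≤ p) (hk : 0 < k)
    (P : Measure (Evec d)) [IsProbabilityMeasure P]
    (hmom : (∫⁻ x, (‖x‖₊ : ℝ≥0∞) ^ p ∂P) < ⊤)
    (w : Evec d)
    (hpos : ∀ Q ∈ wBall p k P, ∀ᵐ x ∂Q, 0 ≤ (inner ℝ w x : ℝ)) :
    (∀ Q ∈ wBall p k P, ∀ᵐ x ∂Q, (inner ℝ w x : ℝ) = 0) ∧ w = 0 := by
  have hw : w = 0 := by
    obtain ⟨t, ht, hQ⟩ := exists_diracMix_mem_wBall (zero_lt_one.trans_le hp) hk P hmom (-w)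
    have h : 0 ≤ inner ℝ w (-w) := self_of_ae_diracMix (q := (0 ≤ inner ℝ w ·)) ht.ne' (hpos _ hQ)
    rw [inner_neg_right, real_inner_self_eq_norm_sq, neg_nonneg] at h
    simpa using h
  exact ⟨fun Q _ => Eventually.of_forall fun _ => by simp [hw], hw⟩
end
end

section
/- Let p ≥ 1, let P be a Borel probability measure on ℝ^d with finite p-th moment, and let k > 0. Then the quasi-sure support of the Wasserstein ball B_k(P), i.e. the intersection of all closed sets A ⊆ ℝ^d with Q(A) = 1 for every Q ∈ B_k(P), equals all of ℝ^d. -/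
open MeasureTheory Filter
open scoped ENNReal

noncomputable section

-- auxiliary: (a+b)^p ≤ 2^p * (a^p + b^p) in ℝ≥0∞ for p ≥ 0
lemma aux_rpow_add {a b : ℝ≥0∞} {p : ℝ} (hp : 0 ≤ p) :
    (a + b) ^ p ≤ 2 ^ p * (a ^ p + b ^ p) := by
  have h1 : a + b ≤ 2 * max a b := by
    rcases le_total a b with h | h
    · simpa [max_eq_right h, two_mul] using add_le_add h le_rfl
    · simpa [max_eq_left h, two_mul] using add_le_add le_rfl h
  calc (a + b) ^ p ≤ (2 * max a b) ^ p := ENNReal.rpow_le_rpow h1 hp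
    _ = 2 ^ p * (max a b) ^ p := ENNReal.mul_rpow_of_nonneg _ _ hp
    _ ≤ 2 ^ p * (a ^ p + b ^ p) := by
        gcongr
        rcases le_total a b with h | h
        · rw [max_eq_right h]; exact le_add_self
        · rw [max_eq_left h]; exact le_add_right le_rfl

/-- the quasi-sure support of the Wasserstein ball `B_k(P)` is all of `ℝ^d`. -/
theorem qs_support_wasserstein_ball {d : ℕ} (p k : ℝ) (hp : 1 ≤ p) (hk : 0 < k)
    (P : Measure (Evec d)) [IsProbabilityMeasure P]
    (hmom : (∫⁻ x, (‖x‖₊ : ℝ≥0∞) ^ p ∂P) < ⊤) :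
    ⋂₀ {A : Set (Evec d) | IsClosed A ∧ ∀ Q ∈ wBall p k P, Q A = 1} = Set.univ := by
  have hp0 : (0:ℝ) < p := lt_of_lt_of_le one_pos hp
  ext x₀
  simp only [Set.mem_sInter, Set.mem_univ, iff_true, Set.mem_setOf_eq]
  rintro A ⟨hAclosed, hAfull⟩
  -- the cost of moving P to δ_{x₀}
  set C : ℝ≥0∞ := ∫⁻ x, (‖x - x₀‖₊ : ℝ≥0∞) ^ p ∂P with hCdef
  have hCfin : C < ⊤ := by
    have hb : ∀ x : Evec d, (‖x - x₀‖₊ : ℝ≥0∞) ^ p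
        ≤ 2 ^ p * ((‖x‖₊ : ℝ≥0∞) ^ p + (‖x₀‖₊ : ℝ≥0∞) ^ p) := by
      intro x
      calc (‖x - x₀‖₊ : ℝ≥0∞) ^ p ≤ ((‖x‖₊ : ℝ≥0∞) + (‖x₀‖₊ : ℝ≥0∞)) ^ p := by
            apply ENNReal.rpow_le_rpow _ hp0.le
            exact_mod_cast nnnorm_sub_le x x₀
        _ ≤ 2 ^ p * ((‖x‖₊ : ℝ≥0∞) ^ p + (‖x₀‖₊ : ℝ≥0∞) ^ p) := aux_rpow_add hp0.le
    calc C ≤ ∫⁻ x, 2 ^ p * ((‖x‖₊ : ℝ≥0∞) ^ p + (‖x₀‖₊ : ℝ≥0∞) ^ p) ∂P :=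
          lintegral_mono hb
      _ = 2 ^ p * ((∫⁻ x, (‖x‖₊ : ℝ≥0∞) ^ p ∂P) + (‖x₀‖₊ : ℝ≥0∞) ^ p) := by
          rw [lintegral_const_mul' _ _ (ENNReal.rpow_ne_top_of_nonneg hp0.le (by norm_num)),
            lintegral_add_right' _ aemeasurable_const, lintegral_const, measure_univ, mul_one]
      _ < ⊤ := ENNReal.mul_lt_top (ENNReal.rpow_lt_top_of_nonneg hp0.le (by norm_num))
          (ENNReal.add_lt_top.mpr ⟨hmom, ENNReal.rpow_lt_top_of_nonneg hp0.le (by simp)⟩)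
  -- choose ε
  set ε : ℝ≥0∞ := min 1 ((ENNReal.ofReal k) ^ p / (C + 1)) with hεdef
  have hkpos : (0:ℝ≥0∞) < (ENNReal.ofReal k) ^ p :=
    ENNReal.rpow_pos (by simpa using hk) (by simp)
  have hεpos : 0 < ε := by
    apply lt_min one_pos
    apply ENNReal.div_pos hkpos.ne'
    exact (ENNReal.add_lt_top.mpr ⟨hCfin, ENNReal.one_lt_top⟩).ne
  have hε1 : ε ≤ 1 := min_le_left _ _
  have hεC : ε * C ≤ (ENNReal.ofReal k) ^ p := by
    calc ε * C ≤ ((ENNReal.ofReal k) ^ p / (C + 1)) * (C + 1) := by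
          apply mul_le_mul' (min_le_right _ _) (le_add_right le_rfl)
      _ = (ENNReal.ofReal k) ^ p := ENNReal.div_mul_cancel
          (by simp) (ENNReal.add_lt_top.mpr ⟨hCfin, ENNReal.one_lt_top⟩).ne
  -- the measure Q and coupling π
  set Q : Measure (Evec d) := (1 - ε) • P + ε • Measure.dirac x₀ with hQdef
  set π : Measure (Evec d × Evec d) :=
    (1 - ε) • P.map (fun x => (x, x)) + ε • (P.prod (Measure.dirac x₀)) with hπdef
  have hεsum : (1 - ε) + ε = 1 := tsub_add_cancel_of_le hε1
  have hεne : ε ≠ ⊤ := (lt_of_le_of_lt hε1 ENNReal.one_lt_top).ne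
  have h1εne : (1 - ε) ≠ ⊤ := (lt_of_le_of_lt tsub_le_self ENNReal.one_lt_top).ne
  have hdiag : Measurable (fun x : Evec d => (x, x)) := measurable_id.prodMk measurable_id
  have hQprob : IsProbabilityMeasure Q := by
    constructor
    rw [hQdef]
    simp [Measure.add_apply, hεsum]
  have hπfst : π.map Prod.fst = P := by
    rw [hπdef, Measure.map_add _ _ measurable_fst, Measure.map_smul, Measure.map_smul,
      Measure.map_map measurable_fst hdiag, Measure.map_fst_prod]
    have hcomp : (Prod.fst ∘ fun x : Evec d => (x, x)) = id := rfl
    rw [hcomp, Measure.map_id, measure_univ, one_smul, ← add_smul, hεsum, one_smul]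
  have hπsnd : π.map Prod.snd = Q := by
    rw [hπdef, Measure.map_add _ _ measurable_snd, Measure.map_smul, Measure.map_smul,
      Measure.map_map measurable_snd hdiag, Measure.map_snd_prod]
    have hcomp : (Prod.snd ∘ fun x : Evec d => (x, x)) = id := rfl
    rw [hcomp, Measure.map_id, measure_univ, one_smul, hQdef]
  have hπprob : IsProbabilityMeasure π := by
    constructor
    have h : π Set.univ = (π.map Prod.fst) Set.univ := by
      rw [Measure.map_apply measurable_fst MeasurableSet.univ, Set.preimage_univ]
    rw [h, hπfst, measure_univ]
  have hπcoup : π ∈ couplings P Q := ⟨hπprob, hπfst, hπsnd⟩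
  have hmeasf : Measurable (fun z : Evec d × Evec d => (‖z.1 - z.2‖₊ : ℝ≥0∞) ^ p) := by
    exact ENNReal.continuous_rpow_const.measurable.comp
      (measurable_fst.sub measurable_snd).nnnorm.coe_nnreal_ennreal
  -- cost of π
  have hcost : (∫⁻ z, (‖z.1 - z.2‖₊ : ℝ≥0∞) ^ p ∂π) = ε * C := by
    rw [hπdef, lintegral_add_measure, lintegral_smul_measure, lintegral_smul_measure,
      lintegral_map hmeasf hdiag]
    have h0 : ∫⁻ x : Evec d, (‖x - x‖₊ : ℝ≥0∞) ^ p ∂P = 0 := by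
      simp [ENNReal.zero_rpow_of_pos hp0]
    rw [h0, smul_zero, zero_add, smul_eq_mul]
    congr 1
    rw [lintegral_prod _ hmeasf.aemeasurable]
    simp only [lintegral_dirac, hCdef]
  -- moment of Q
  have hQmom : (∫⁻ x, (‖x‖₊ : ℝ≥0∞) ^ p ∂Q) < ⊤ := by
    rw [hQdef, lintegral_add_measure, lintegral_smul_measure, lintegral_smul_measure,
      lintegral_dirac]
    apply ENNReal.add_lt_top.mpr
    constructor
    · exact ENNReal.mul_lt_top h1εne.lt_top hmom
    · exact ENNReal.mul_lt_top hεne.lt_top (ENNReal.rpow_lt_top_of_nonneg hp0.le (by simp))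
  -- Wasserstein bound
  have hW : Wdist p P Q ≤ ENNReal.ofReal k := by
    have h1 : Wdist p P Q ≤ (∫⁻ z, (‖z.1 - z.2‖₊ : ℝ≥0∞) ^ p ∂π) ^ (1 / p) :=
      iInf_le_of_le π (iInf_le_of_le hπcoup le_rfl)
    refine h1.trans ?_
    rw [hcost]
    calc (ε * C) ^ (1 / p) ≤ ((ENNReal.ofReal k) ^ p) ^ (1 / p) :=
          ENNReal.rpow_le_rpow hεC (by positivity)
      _ = ENNReal.ofReal k := by
          rw [← ENNReal.rpow_mul, mul_one_div_cancel hp0.ne', ENNReal.rpow_one]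
  have hQball : Q ∈ wBall p k P := ⟨hQprob, hQmom, hW⟩
  -- conclude
  by_contra hx
  have hAmeas : MeasurableSet A := hAclosed.measurableSet
  have hQA : Q A = 1 := hAfull Q hQball
  have hQAc : Q Aᶜ = 0 := by
    have := prob_compl_eq_zero_iff (μ := Q) hAmeas
    exact this.mpr hQA
  have hdiracAc : Measure.dirac x₀ Aᶜ = 1 := by
    rw [Measure.dirac_apply' _ hAmeas.compl]
    simp [Set.indicator_of_mem (Set.mem_compl hx)]
  have : ε ≤ Q Aᶜ := by
    rw [hQdef]
    simp only [Measure.add_apply, Measure.smul_apply, smul_eq_mul, hdiracAc, mul_one]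
    exact le_add_self
  rw [hQAc] at this
  exact absurd (le_antisymm this zero_le) hεpos.ne'
end
end

section
/- Let p ≥ 1, let P be a Borel probability measure on ℝ^d with finite p-th moment, and let k > 0. Then there exists a probability measure P* ∈ B_k(P) such that the affine hull of the support of P* equals ℝ^d and the no-arbitrage condition NA(P*) holds, i.e. for every w ∈ ℝ^d, ⟨w,x⟩ ≥ 0 for P*-almost every x implies ⟨w,x⟩ = 0 for P*-almost every x. -/
open MeasureTheory Filter
open scoped ENNReal

noncomputable section

/-- The support of a probability measure: the intersection of all closed sets of full measure. -/
def msupport {d : ℕ} (Q : Measure (Evec d)) : Set (Evec d) :=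
  ⋂₀ {A : Set (Evec d) | IsClosed A ∧ Q A = 1}

set_option maxHeartbeats 1000000 in
/-- there is a measure `P* ∈ B_k(P)` whose support has full affine hull and which
satisfies the no-arbitrage condition `NA(P*)`. -/
theorem exists_full_support_na_measure {d : ℕ} (p k : ℝ) (hp : 1 ≤ p) (hk : 0 < k)
    (P : Measure (Evec d)) [IsProbabilityMeasure P]
    (hmom : (∫⁻ x, (‖x‖₊ : ℝ≥0∞) ^ p ∂P) < ⊤) :
    ∃ Pstar ∈ wBall p k P,
      affineSpan ℝ (msupport Pstar) = ⊤ ∧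
      ∀ w : Evec d, (∀ᵐ x ∂Pstar, 0 ≤ (inner ℝ w x : ℝ)) → (∀ᵐ x ∂Pstar, (inner ℝ w x : ℝ) = 0) := by
  classical
  have hp0 : (0:ℝ) < p := lt_of_lt_of_le one_pos hp
  set e : Fin d → Evec d := fun i => EuclideanSpace.single i (1:ℝ) with he
  set c : ℝ≥0∞ := ((2*d+1 : ℕ) : ℝ≥0∞)⁻¹ with hc
  have hcnat : ((2*d+1 : ℕ) : ℝ≥0∞) ≠ 0 := Nat.cast_ne_zero.2 (Nat.succ_ne_zero _)
  have hcnat' : ((2*d+1 : ℕ) : ℝ≥0∞) ≠ ⊤ := ENNReal.natCast_ne_top _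
  have hc0 : c ≠ 0 := by rw [hc]; exact ENNReal.inv_ne_zero.2 hcnat'
  have hctop : c ≠ ⊤ := by rw [hc]; exact ENNReal.inv_ne_top.2 hcnat
  set ν : Measure (Evec d) :=
    Measure.dirac 0 + ∑ i : Fin d, (Measure.dirac (e i) + Measure.dirac (-(e i))) with hν
  set μ : Measure (Evec d) := c • ν with hμ
  have hνuniv : ν Set.univ = ((2*d+1 : ℕ) : ℝ≥0∞) := by
    have h : ν Set.univ = 1 + ((d : ℝ≥0∞) + d) := by
      simp [hν, Measure.add_apply, Measure.finset_sum_apply, Finset.sum_const,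
        Finset.card_univ, nsmul_eq_mul, mul_add, mul_one]
    rw [h]
    push_cast
    ring
  haveI hμprob : IsProbabilityMeasure μ := by
    constructor
    rw [hμ, Measure.smul_apply, hνuniv, smul_eq_mul, hc]
    exact ENNReal.inv_mul_cancel hcnat hcnat'
  -- the integrand
  set f : Evec d → ℝ≥0∞ := fun x => (‖x‖₊ : ℝ≥0∞) ^ p with hf
  have hfmeas : Measurable f := (measurable_nnnorm.coe_nnreal_ennreal).pow_const p
  have hf1 : Measurable fun z : Evec d × Evec d => f z.1 := hfmeas.comp measurable_fst
  have hf2 : Measurable fun z : Evec d × Evec d => f z.2 := hfmeas.comp measurable_snd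
  have hfd : ∀ a : Evec d, ∫⁻ x, f x ∂(Measure.dirac a) = f a := fun a =>
    lintegral_dirac' a hfmeas
  have hμmom : ∫⁻ x, f x ∂μ < ⊤ := by
    rw [hμ, lintegral_smul_measure, hν, lintegral_add_measure, lintegral_finset_sum_measure]
    simp only [lintegral_add_measure, hfd]
    refine ENNReal.mul_lt_top hctop.lt_top ?_
    refine ENNReal.add_lt_top.2 ⟨?_, ?_⟩
    · exact ENNReal.rpow_lt_top_of_nonneg hp0.le ENNReal.coe_ne_top
    · refine (ENNReal.sum_lt_top).2 fun i _ => ENNReal.add_lt_top.2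
        ⟨ENNReal.rpow_lt_top_of_nonneg hp0.le ENNReal.coe_ne_top,
         ENNReal.rpow_lt_top_of_nonneg hp0.le ENNReal.coe_ne_top⟩
  -- the transport cost to μ
  set g : Evec d × Evec d → ℝ≥0∞ := fun z => (‖z.1 - z.2‖₊ : ℝ≥0∞) ^ p with hg
  have hgmeas : Measurable g :=
    ((measurable_fst.sub measurable_snd).nnnorm.coe_nnreal_ennreal).pow_const p
  set C : ℝ≥0∞ := ∫⁻ z, g z ∂(P.prod μ) with hC
  have hCtop : C < ⊤ := by
    have hb : ∀ z : Evec d × Evec d, g z ≤ (2:ℝ≥0∞) ^ (p-1) * (f z.1 + f z.2) := by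
      intro z
      have h1 : (‖z.1 - z.2‖₊ : ℝ≥0∞) ≤ (‖z.1‖₊ : ℝ≥0∞) + (‖z.2‖₊ : ℝ≥0∞) := by
        exact_mod_cast nnnorm_sub_le z.1 z.2
      calc g z ≤ ((‖z.1‖₊ : ℝ≥0∞) + (‖z.2‖₊ : ℝ≥0∞)) ^ p :=
            ENNReal.rpow_le_rpow h1 hp0.le
        _ ≤ (2:ℝ≥0∞) ^ (p-1) * (f z.1 + f z.2) :=
            ENNReal.rpow_add_le_mul_rpow_add_rpow _ _ hp
    have h2top : (2:ℝ≥0∞) ^ (p-1) ≠ ⊤ :=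
      ENNReal.rpow_ne_top_of_nonneg (by linarith) (by norm_num)
    have hle : C ≤ (2:ℝ≥0∞) ^ (p-1) * (∫⁻ z, (f z.1 + f z.2) ∂(P.prod μ)) := by
      rw [← lintegral_const_mul' _ _ h2top]
      exact lintegral_mono hb
    have hsplit : ∫⁻ z : Evec d × Evec d, (f z.1 + f z.2) ∂(P.prod μ)
        = (∫⁻ x, f x ∂P) + (∫⁻ x, f x ∂μ) := by
      rw [lintegral_add_left hf1]
      congr 1
      · rw [← lintegral_map hfmeas measurable_fst, Measure.map_fst_prod, measure_univ, one_smul]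
      · rw [← lintegral_map hfmeas measurable_snd, Measure.map_snd_prod, measure_univ, one_smul]
    refine lt_of_le_of_lt hle ?_
    rw [hsplit]
    exact ENNReal.mul_lt_top h2top.lt_top (ENNReal.add_lt_top.2 ⟨hmom, hμmom⟩)
  -- the mixing weight
  set ε : ℝ≥0∞ := min 1 (ENNReal.ofReal k ^ p / C) with hε
  have hkp0 : (0:ℝ≥0∞) < ENNReal.ofReal k ^ p :=
    ENNReal.rpow_pos (ENNReal.ofReal_pos.2 hk) ENNReal.ofReal_ne_top
  have hε0 : ε ≠ 0 := by
    refine (lt_min one_pos ?_).ne'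
    exact ENNReal.div_pos hkp0.ne' hCtop.ne
  have hε1 : ε ≤ 1 := min_le_left _ _
  have hεtop : ε ≠ ⊤ := (lt_of_le_of_lt hε1 ENNReal.one_lt_top).ne
  have hεC : ε * C ≤ ENNReal.ofReal k ^ p := by
    rcases eq_or_ne C 0 with h0 | h0
    · simp [h0]
    · exact (ENNReal.le_div_iff_mul_le (Or.inl h0) (Or.inl hCtop.ne)).1 (min_le_right _ _)
  -- the measure Pstar
  set Pstar : Measure (Evec d) := (1 - ε) • P + ε • μ with hPs
  have hPsuniv : IsProbabilityMeasure Pstar := by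
    constructor
    rw [hPs, Measure.add_apply, Measure.smul_apply, Measure.smul_apply,
      measure_univ, measure_univ, smul_eq_mul, smul_eq_mul, mul_one, mul_one]
    exact tsub_add_cancel_of_le hε1
  -- key: Pstar dominates ε • μ
  have hPsge : ∀ s : Set (Evec d), ε * μ s ≤ Pstar s := by
    intro s
    rw [hPs, Measure.add_apply, Measure.smul_apply, smul_eq_mul]
    exact le_add_self
  -- the coupling
  have hdiag : Measurable fun x : Evec d => (x, x) := measurable_id.prodMk measurable_id
  set π : Measure (Evec d × Evec d) := (1 - ε) • (P.map fun x => (x, x)) + ε • (P.prod μ)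
    with hπ
  have hπfst : π.map Prod.fst = P := by
    rw [hπ, Measure.map_add _ _ measurable_fst, Measure.map_smul, Measure.map_smul,
      Measure.map_map measurable_fst hdiag, Measure.map_fst_prod, measure_univ, one_smul]
    have : (Prod.fst ∘ fun x : Evec d => (x, x)) = id := rfl
    rw [this, Measure.map_id, ← add_smul, tsub_add_cancel_of_le hε1, one_smul]
  have hπsnd : π.map Prod.snd = Pstar := by
    rw [hπ, Measure.map_add _ _ measurable_snd, Measure.map_smul, Measure.map_smul,
      Measure.map_map measurable_snd hdiag, Measure.map_snd_prod, measure_univ, one_smul]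
    have : (Prod.snd ∘ fun x : Evec d => (x, x)) = id := rfl
    rw [this, Measure.map_id, hPs]
  have hπprob : IsProbabilityMeasure π := by
    constructor
    have h1 : π Set.univ = (π.map Prod.fst) Set.univ := by
      rw [Measure.map_apply measurable_fst MeasurableSet.univ, Set.preimage_univ]
    rw [h1, hπfst]
    exact measure_univ
  have hπcost : ∫⁻ z, g z ∂π ≤ ENNReal.ofReal k ^ p := by
    rw [hπ, lintegral_add_measure, lintegral_smul_measure, lintegral_smul_measure,
      lintegral_map hgmeas hdiag]
    have hzero : ∫⁻ x, g (x, x) ∂P = 0 := by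
      have hgz : ∀ x : Evec d, g (x, x) = 0 := fun x => by
        simp [hg, ENNReal.zero_rpow_of_pos hp0]
      simp [hgz]
    rw [hzero, smul_zero, zero_add, smul_eq_mul]
    exact hεC
  have hWle : Wdist p P Pstar ≤ ENNReal.ofReal k := by
    have hmem : π ∈ couplings P Pstar := ⟨hπprob, hπfst, hπsnd⟩
    unfold Wdist
    refine le_trans (iInf₂_le π hmem) ?_
    calc (∫⁻ z, g z ∂π) ^ (1/p) ≤ (ENNReal.ofReal k ^ p) ^ (1/p) :=
          ENNReal.rpow_le_rpow hπcost (by positivity)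
      _ = ENNReal.ofReal k := by
          rw [← ENNReal.rpow_mul, mul_one_div_cancel hp0.ne', ENNReal.rpow_one]
  -- moment of Pstar
  have hPsmom : ∫⁻ x, f x ∂Pstar < ⊤ := by
    rw [hPs, lintegral_add_measure, lintegral_smul_measure, lintegral_smul_measure]
    refine ENNReal.add_lt_top.2 ⟨?_, ?_⟩
    · exact ENNReal.mul_lt_top (lt_of_le_of_lt tsub_le_self ENNReal.one_lt_top) hmom
    · exact ENNReal.mul_lt_top hεtop.lt_top hμmom
  -- pointwise domination of diracs by ν
  have hν_ge : ∀ s : Evec d, (s = 0 ∨ ∃ i : Fin d, s = e i ∨ s = -(e i)) →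
      ∀ t : Set (Evec d), MeasurableSet t → Measure.dirac s t ≤ ν t := by
    rintro s hs t ht
    rw [hν, Measure.add_apply, Measure.finset_sum_apply]
    rcases hs with rfl | ⟨i, rfl | rfl⟩
    · exact le_self_add
    · refine le_add_left ?_
      refine le_trans ?_ (Finset.single_le_sum
        (f := fun j => (Measure.dirac (e j) + Measure.dirac (-(e j))) t)
        (fun j _ => zero_le) (Finset.mem_univ i))
      simp only [Measure.add_apply]
      exact le_self_add
    · refine le_add_left ?_
      refine le_trans ?_ (Finset.single_le_sum
        (f := fun j => (Measure.dirac (e j) + Measure.dirac (-(e j))) t)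
        (fun j _ => zero_le) (Finset.mem_univ i))
      simp only [Measure.add_apply]
      exact le_add_self
  -- the atoms are in the support
  have hatom : ∀ s : Evec d, (s = 0 ∨ ∃ i : Fin d, s = e i ∨ s = -(e i)) →
      s ∈ msupport Pstar := by
    intro s hsν
    rw [msupport]
    refine Set.mem_sInter.2 fun A hA => ?_
    by_contra hsA
    have hAc : Pstar Aᶜ = 0 := by
      have h := measure_compl hA.1.measurableSet (measure_ne_top Pstar A)
      rw [hA.2, hPsuniv.measure_univ] at h
      simpa using h
    have h1 : Measure.dirac s Aᶜ = 1 := by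
      rw [Measure.dirac_apply' s hA.1.measurableSet.compl]
      simp [Set.indicator_of_mem, hsA]
    have h2 : (1:ℝ≥0∞) ≤ ν Aᶜ := h1 ▸ hν_ge s hsν Aᶜ hA.1.measurableSet.compl
    have h3 : ε * (c * 1) ≤ Pstar Aᶜ := by
      refine le_trans ?_ (hPsge Aᶜ)
      rw [hμ, Measure.smul_apply, smul_eq_mul]
      exact mul_le_mul_right (mul_le_mul_right h2 c) ε
    rw [hAc, mul_one] at h3
    rcases mul_eq_zero.1 (le_antisymm h3 (zero_le)) with h | h
    · exact hε0 h
    · exact hc0 h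
  have h0mem : (0 : Evec d) ∈ msupport Pstar := hatom 0 (Or.inl rfl)
  have heimem : ∀ i : Fin d, e i ∈ msupport Pstar := fun i =>
    hatom _ (Or.inr ⟨i, Or.inl rfl⟩)
  -- full affine span
  have hspan : affineSpan ℝ (msupport Pstar) = ⊤ := by
    have hne : (msupport Pstar).Nonempty := ⟨0, h0mem⟩
    rw [AffineSubspace.affineSpan_eq_top_iff_vectorSpan_eq_top_of_nonempty ℝ (Evec d) (Evec d) hne]
    rw [eq_top_iff]
    have hsp : Submodule.span ℝ (Set.range e) = ⊤ := by
      have h := ((EuclideanSpace.basisFun (Fin d) ℝ).toBasis).span_eq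
      rw [← h]
      congr 1
      ext x
      simp [he, EuclideanSpace.basisFun_apply]
    rw [← hsp, Submodule.span_le]
    rintro _ ⟨i, rfl⟩
    have h := vsub_mem_vectorSpan ℝ (heimem i) h0mem
    simpa using h
  -- no arbitrage
  refine ⟨Pstar, ⟨hPsuniv, hPsmom, hWle⟩, hspan, ?_⟩
  intro w hw
  have hcont : Continuous fun x : Evec d => (inner ℝ w x : ℝ) :=
    Continuous.inner continuous_const continuous_id
  have hmeasN : MeasurableSet {x : Evec d | ¬ 0 ≤ (inner ℝ w x : ℝ)} := by
    have hNeq : {x : Evec d | ¬ 0 ≤ (inner ℝ w x : ℝ)} = {x | (inner ℝ w x : ℝ) < 0} := by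
      ext x; simp [not_le]
    rw [hNeq]
    exact measurableSet_lt hcont.measurable measurable_const
  rw [ae_iff] at hw
  set N := {x : Evec d | ¬ 0 ≤ (inner ℝ w x : ℝ)} with hN
  have hμN : μ N = 0 := by
    have h := hPsge N
    rw [hw] at h
    rcases mul_eq_zero.1 (le_antisymm h (zero_le)) with h' | h'
    · exact absurd h' hε0
    · exact h'
  have hνN : ν N = 0 := by
    rw [hμ, Measure.smul_apply, smul_eq_mul] at hμN
    rcases mul_eq_zero.1 hμN with h' | h'
    · exact absurd h' hc0
    · exact h'
  have hdiracN : ∀ s : Evec d, (s = 0 ∨ ∃ i : Fin d, s = e i ∨ s = -(e i)) →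
      0 ≤ (inner ℝ w s : ℝ) := by
    intro s hs
    by_contra hmem
    have h1 : Measure.dirac s N = 1 := by
      rw [Measure.dirac_apply' s hmeasN, Set.indicator_of_mem (show s ∈ N from hmem)]
      rfl
    have h2 := hν_ge s hs N hmeasN
    rw [h1, hνN] at h2
    exact (by norm_num : ¬ (1:ℝ≥0∞) ≤ 0) h2
  have hwi : ∀ i : Fin d, w i = 0 := by
    intro i
    have h1 : 0 ≤ (inner ℝ w (e i) : ℝ) := hdiracN _ (Or.inr ⟨i, Or.inl rfl⟩)
    have h2 : 0 ≤ (inner ℝ w (-(e i)) : ℝ) := hdiracN _ (Or.inr ⟨i, Or.inr rfl⟩)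
    have h3 : (inner ℝ w (e i) : ℝ) = w i := by
      simp [he, EuclideanSpace.inner_single_right]
    have h4 : (inner ℝ w (-(e i)) : ℝ) = -(w i) := by rw [inner_neg_right, h3]
    rw [h3] at h1
    rw [h4] at h2
    linarith
  have hw0 : w = 0 := by
    ext i
    exact hwi i
  refine ae_of_all _ fun x => ?_
  rw [hw0, inner_zero_left]
end
end

section
/- Let p ≥ 1, let P be a Borel probability measure on ℝ^d with finite p-th moment, let x₀ ≠ 0 be a real number, and let U : ℝ → ℝ be non-decreasing with lim_{x→−∞} U(x) = −∞. Define u(k,w) := inf_{Q ∈ B_k(P)} E_Q[U(x₀ + x₀⟨w, X⟩)], where X is the identity map on ℝ^d. Then for every w ∈ ℝ^d with w ≠ 0 and E_P[U(x₀ + x₀⟨w, X⟩)] < ∞, one has lim_{k→∞} u(k,w) = −∞. -/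
open MeasureTheory Filter
open scoped ENNReal

noncomputable section

/-- The (extended-real-valued) expectation `E_Q[f] = E_Q[f⁺] − E_Q[f⁻]`. -/
noncomputable def eexp {α : Type*} [MeasurableSpace α] (Q : Measure α) (f : α → ℝ) : EReal :=
  ((∫⁻ x, ENNReal.ofReal (f x) ∂Q : ℝ≥0∞) : EReal) - ((∫⁻ x, ENNReal.ofReal (-(f x)) ∂Q : ℝ≥0∞) : EReal)

/-- The robust value `u(k,w) = inf_{Q ∈ B_k(P)} E_Q[U(x₀ + x₀⟨w,X⟩)]`. -/
noncomputable def uval {d : ℕ} (p k x₀ : ℝ) (P : Measure (Evec d)) (U : ℝ → ℝ) (w : Evec d) : EReal :=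
  ⨅ Q ∈ wBall p k P, eexp Q (fun x => U (x₀ + x₀ * (inner ℝ w x : ℝ)))

/-!
Testing against Dirac masses suffices. Coupling `P` with `δ_a` through the product coupling and
applying Minkowski's inequality gives `W_p(P, δ_a) ≤ ‖X‖_{L^p(P)} + ‖a‖`, so `δ_a` lies in
`B_k(P)` once `k` is large. Since `w ≠ 0` and `x₀ ≠ 0`, the point `a` can be chosen with
`x₀ + x₀⟨w, a⟩` equal to any prescribed `T`, whence `u(k, w) ≤ U(T)` for all large `k`; and
`U(T)` is arbitrarily negative.
-/

lemma EReal.coe_ennreal_ofReal_sub_coe_ennreal_ofReal_neg (a : ℝ) :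
    ((ENNReal.ofReal a : ℝ≥0∞) : EReal) - ((ENNReal.ofReal (-a) : ℝ≥0∞) : EReal) = a := by
  rcases le_total 0 a with h | h
  · simp [EReal.coe_ennreal_ofReal, max_eq_left h, ENNReal.ofReal_eq_zero.2 (neg_nonpos.2 h)]
  · simp [EReal.coe_ennreal_ofReal, ENNReal.ofReal_eq_zero.2 h, max_eq_left (neg_nonneg.2 h)]

lemma eexp_dirac {α : Type*} [MeasurableSpace α] [MeasurableSingletonClass α]
    (f : α → ℝ) (a : α) : eexp (Measure.dirac a) f = f a := by
  rw [eexp, lintegral_dirac, lintegral_dirac,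
    EReal.coe_ennreal_ofReal_sub_coe_ennreal_ofReal_neg]

lemma map_prodMk_const_mem_couplings {d : ℕ} (P : Measure (Evec d)) [IsProbabilityMeasure P]
    (a : Evec d) : P.map (fun x => (x, a)) ∈ couplings P (Measure.dirac a) := by
  have hmeas : Measurable (fun x : Evec d => (x, a)) := measurable_id.prodMk measurable_const
  refine ⟨Measure.isProbabilityMeasure_map hmeas.aemeasurable, ?_, ?_⟩
  · rw [Measure.map_map measurable_fst hmeas]
    exact Measure.map_id
  · rw [Measure.map_map measurable_snd hmeas]
    exact (Measure.map_const P a).trans (by rw [measure_univ, one_smul])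

lemma Wdist_dirac_le {d : ℕ} {p : ℝ} (hp : 1 ≤ p) (P : Measure (Evec d))
    [IsProbabilityMeasure P] (a : Evec d) :
    Wdist p P (Measure.dirac a) ≤ (∫⁻ x, (‖x‖₊ : ℝ≥0∞) ^ p ∂P) ^ (1 / p) + ‖a‖₊ := by
  have hmeas : Measurable (fun x : Evec d => (x, a)) := measurable_id.prodMk measurable_const
  calc Wdist p P (Measure.dirac a)
      ≤ (∫⁻ z, (‖z.1 - z.2‖₊ : ℝ≥0∞) ^ p ∂(P.map fun x => (x, a))) ^ (1 / p) :=
        iInf₂_le _ (map_prodMk_const_mem_couplings P a)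
    _ = (∫⁻ x, (‖x - a‖₊ : ℝ≥0∞) ^ p ∂P) ^ (1 / p) := by
        rw [lintegral_map (by fun_prop) hmeas]
    _ ≤ (∫⁻ x, ((‖x‖₊ : ℝ≥0∞) + ‖a‖₊) ^ p ∂P) ^ (1 / p) := by
        gcongr with x
        exact_mod_cast nnnorm_sub_le x a
    _ ≤ (∫⁻ x, (‖x‖₊ : ℝ≥0∞) ^ p ∂P) ^ (1 / p) + (∫⁻ _, (‖a‖₊ : ℝ≥0∞) ^ p ∂P) ^ (1 / p) :=
        ENNReal.lintegral_Lp_add_le (by fun_prop) aemeasurable_const hp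
    _ = (∫⁻ x, (‖x‖₊ : ℝ≥0∞) ^ p ∂P) ^ (1 / p) + ‖a‖₊ := by
        rw [lintegral_const, measure_univ, mul_one, ← ENNReal.rpow_mul,
          mul_one_div_cancel (by positivity), ENNReal.rpow_one]

lemma dirac_mem_wBall {d : ℕ} {p k : ℝ} (hp : 1 ≤ p) (P : Measure (Evec d))
    [IsProbabilityMeasure P] (hmom : (∫⁻ x, (‖x‖₊ : ℝ≥0∞) ^ p ∂P) < ⊤) {a : Evec d}
    (hk : ((∫⁻ x, (‖x‖₊ : ℝ≥0∞) ^ p ∂P) ^ (1 / p)).toReal + ‖a‖ ≤ k) :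
    Measure.dirac a ∈ wBall p k P := by
  have hp0 : 0 ≤ 1 / p := by positivity
  refine ⟨inferInstance, ?_, (Wdist_dirac_le hp P a).trans ?_⟩
  · rw [lintegral_dirac]
    exact ENNReal.rpow_lt_top_of_nonneg (by positivity) ENNReal.coe_ne_top
  · rw [← ENNReal.ofReal_toReal (ENNReal.rpow_lt_top_of_nonneg hp0 hmom.ne).ne,
      ← ENNReal.ofReal_coe_nnreal, coe_nnnorm,
      ← ENNReal.ofReal_add ENNReal.toReal_nonneg (norm_nonneg a)]
    exact ENNReal.ofReal_le_ofReal hk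

lemma exists_inner_eq {E : Type*} [NormedAddCommGroup E] [InnerProductSpace ℝ E] {w : E}
    (hw : w ≠ 0) (t : ℝ) : ∃ a : E, inner ℝ w a = t := by
  refine ⟨(t / ‖w‖ ^ 2) • w, ?_⟩
  rw [real_inner_smul_right, real_inner_self_eq_norm_sq]
  field_simp

lemma uval_le_of_dirac_mem_wBall {d : ℕ} {p k x₀ : ℝ} {P : Measure (Evec d)} (U : ℝ → ℝ)
    (w : Evec d) {a : Evec d} (ha : Measure.dirac a ∈ wBall p k P) :
    uval p k x₀ P U w ≤ U (x₀ + x₀ * inner ℝ w a) :=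
  (iInf₂_le _ ha).trans_eq (eexp_dirac _ a)

theorem uval_tendsto_bot_general {d : ℕ} (p x₀ : ℝ) (hp : 1 ≤ p) (hx₀ : x₀ ≠ 0)
    (P : Measure (Evec d)) [IsProbabilityMeasure P]
    (hmom : (∫⁻ x, (‖x‖₊ : ℝ≥0∞) ^ p ∂P) < ⊤)
    (U : ℝ → ℝ) (hUbot : Tendsto U atBot atBot)
    (w : Evec d) (hw : w ≠ 0) :
    Tendsto (fun k : ℝ => uval p k x₀ P U w) atTop (nhds (⊥ : EReal)) := by
  rw [EReal.tendsto_nhds_bot_iff_real]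
  intro M
  obtain ⟨T, hT⟩ : ∃ T, U T < M := (hUbot.eventually (eventually_lt_atBot M)).exists
  obtain ⟨a, ha⟩ := exists_inner_eq hw (T / x₀ - 1)
  have hT_eq : x₀ + x₀ * inner ℝ w a = T := by
    rw [ha]
    field_simp
    ring
  filter_upwards [eventually_ge_atTop
    (((∫⁻ x, (‖x‖₊ : ℝ≥0∞) ^ p ∂P) ^ (1 / p)).toReal + ‖a‖)] with k hk
  calc uval p k x₀ P U w ≤ U T :=
        hT_eq ▸ uval_le_of_dirac_mem_wBall U w (dirac_mem_wBall hp P hmom hk)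
    _ < M := EReal.coe_lt_coe_iff.2 hT

/-- `lim_{k→∞} u(k,w) = −∞` for every `w ≠ 0` with `E_P[U(x₀+x₀⟨w,X⟩)] < ∞`. -/
theorem uval_tendsto_bot {d : ℕ} (p x₀ : ℝ) (hp : 1 ≤ p) (hx₀ : x₀ ≠ 0)
    (P : Measure (Evec d)) [IsProbabilityMeasure P]
    (hmom : (∫⁻ x, (‖x‖₊ : ℝ≥0∞) ^ p ∂P) < ⊤)
    (U : ℝ → ℝ) (hU : Monotone U) (hUbot : Tendsto U atBot atBot)
    (w : Evec d) (hw : w ≠ 0)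
    (hfin : eexp P (fun x => U (x₀ + x₀ * (inner ℝ w x : ℝ))) < ⊤) :
    Tendsto (fun k : ℝ => uval p k x₀ P U w) atTop (nhds (⊥ : EReal)) :=
  uval_tendsto_bot_general p x₀ hp hx₀ P hmom U hUbot w hw
end
end

section
/- Let U : ℝ → ℝ be concave, non-decreasing and differentiable. (a) If limsup_{x→+∞} xU'(x)/U(x) < 1 and lim_{x→∞} U(x) > 0, then there exist constants x̄ > 0 and γ < 1 such that U(x̄) > 0 and U(λx) ≤ λ^γ U(x) for all x ≥ x̄ and all λ ≥ 1; moreover limsup_{x→+∞} xU'(x)/U(x) is the infimum of all γ for which such a bound holds. (b) If liminf_{x→−∞} xU'(x)/U(x) > 1, then there exist constants x̲ > 0 and γ' > 1 such that U(−x̲) < 0 and U(λx) ≤ λ^{γ'} U(x) for all x ≤ −x̲ and all λ ≥ 1; moreover liminf_{x→−∞} xU'(x)/U(x) is the supremum of all γ' for which such a bound holds. -/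
open Filter

section AuxKS
open Set Topology

lemma my_tangent (U : ℝ → ℝ) (hconc : ConcaveOn ℝ Set.univ U) (hdiff : Differentiable ℝ U)
    (a y : ℝ) : U y ≤ U a + deriv U a * (y - a) := by
  rcases lt_trichotomy y a with h | rfl | h
  · have h1 := hconc.deriv_le_slope (Set.mem_univ y) (Set.mem_univ a) h (hdiff a)
    rw [slope_def_field] at h1
    have h2 : deriv U a * (a - y) ≤ U a - U y :=
      (le_div_iff₀ (sub_pos.mpr h)).1 h1
    linarith
  · simp
  · have h1 := hconc.slope_le_deriv (Set.mem_univ a) (Set.mem_univ y) h (hdiff a)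
    rw [slope_def_field] at h1
    have h2 : U y - U a ≤ deriv U a * (y - a) :=
      (div_le_iff₀ (sub_pos.mpr h)).1 h1
    linarith

lemma my_deriv_nonneg (U : ℝ → ℝ) (hconc : ConcaveOn ℝ Set.univ U) (hmono : Monotone U)
    (hdiff : Differentiable ℝ U) (x : ℝ) : 0 ≤ deriv U x := by
  have h1 := hconc.slope_le_deriv (Set.mem_univ x) (Set.mem_univ (x+1)) (by linarith) (hdiff x)
  rw [slope_def_field] at h1
  have h2 : 0 ≤ (U (x+1) - U x) / (x + 1 - x) := by
    apply div_nonneg _ (by linarith)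
    have := hmono (show x ≤ x + 1 by linarith)
    linarith
  linarith

lemma my_key_bound (U : ℝ → ℝ) (hdiff : Differentiable ℝ U) (γ x : ℝ)
    (h : ∀ t : ℝ, 1 ≤ t → (t * x) * deriv U (t * x) ≤ γ * U (t * x)) :
    ∀ lam : ℝ, 1 ≤ lam → U (lam * x) ≤ lam ^ γ * U x := by
  intro lam hlam
  have hg : ∀ t : ℝ, 0 < t → HasDerivAt (fun s : ℝ => s ^ (-γ) * U (s * x))
      ((-γ * t ^ (-γ - 1)) * U (t * x) + t ^ (-γ) * (deriv U (t * x) * x)) t := by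
    intro t ht
    exact (Real.hasDerivAt_rpow_const (Or.inl ht.ne')).mul
      (((hdiff (t * x)).hasDerivAt.comp t (hasDerivAt_mul_const x)))
  have hanti : AntitoneOn (fun s : ℝ => s ^ (-γ) * U (s * x)) (Set.Ici 1) := by
    apply antitoneOn_of_deriv_nonpos (convex_Ici 1)
    · intro t ht
      exact (hg t (lt_of_lt_of_le one_pos ht)).continuousAt.continuousWithinAt
    · intro t ht
      rw [interior_Ici] at ht
      exact ((hg t (lt_trans one_pos ht)).differentiableAt).differentiableWithinAt
    · intro t ht
      rw [interior_Ici] at ht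
      have ht0 : (0:ℝ) < t := lt_trans one_pos ht
      rw [(hg t ht0).deriv]
      have key := h t ht.le
      have hrw : t ^ (-γ) = t ^ (-γ - 1) * t := by
        rw [← Real.rpow_add_one ht0.ne' (-γ - 1)]; ring_nf
      have hpos : (0:ℝ) ≤ t ^ (-γ - 1) := (Real.rpow_pos_of_pos ht0 _).le
      calc (-γ * t ^ (-γ - 1)) * U (t * x) + t ^ (-γ) * (deriv U (t * x) * x)
          = t ^ (-γ - 1) * ((t * x) * deriv U (t * x) - γ * U (t * x)) := by
            rw [hrw]; ring
        _ ≤ 0 := mul_nonpos_of_nonneg_of_nonpos hpos (by linarith)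
  have h1 := hanti (Set.self_mem_Ici) (show lam ∈ Set.Ici (1:ℝ) from hlam) hlam
  simp only [Real.one_rpow, one_mul] at h1
  have hlam0 : (0:ℝ) < lam := lt_of_lt_of_le one_pos hlam
  have hid : lam ^ γ * lam ^ (-γ) = 1 := by
    rw [← Real.rpow_add hlam0]; simp
  calc U (lam * x) = lam ^ γ * (lam ^ (-γ) * U (lam * x)) := by
        rw [← mul_assoc, hid, one_mul]
    _ ≤ lam ^ γ * U x :=
        mul_le_mul_of_nonneg_left h1 (Real.rpow_nonneg hlam0.le _)

lemma my_rev_bound (U : ℝ → ℝ) (hdiff : Differentiable ℝ U) (γ x : ℝ)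
    (h : ∀ lam : ℝ, 1 ≤ lam → U (lam * x) ≤ lam ^ γ * U x) :
    x * deriv U x ≤ γ * U x := by
  set φ : ℝ → ℝ := fun t => t ^ γ * U x - U (t * x) with hφdef
  have hφ : HasDerivAt φ (γ * U x - deriv U x * x) 1 := by
    have h1 : HasDerivAt (fun t : ℝ => t ^ γ) (γ * (1:ℝ) ^ (γ - 1)) 1 :=
      Real.hasDerivAt_rpow_const (Or.inl one_ne_zero)
    have h2 : HasDerivAt (fun t : ℝ => U (t * x)) (deriv U (1 * x) * x) 1 :=
      (hdiff (1 * x)).hasDerivAt.comp 1 (hasDerivAt_mul_const x)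
    have h3 := (h1.mul_const (U x)).sub h2
    simp only [Real.one_rpow, mul_one, one_mul] at h3
    exact h3
  have hslope : Tendsto (slope φ 1) (𝓝[>] 1) (𝓝 (γ * U x - deriv U x * x)) :=
    (hasDerivAt_iff_tendsto_slope.mp hφ).mono_left
      (nhdsWithin_mono 1 (fun y hy => ne_of_gt hy))
  have hnn : 0 ≤ γ * U x - deriv U x * x := by
    refine ge_of_tendsto hslope ?_
    filter_upwards [self_mem_nhdsWithin] with t ht
    have ht1 : (1:ℝ) < t := ht
    have hφt : 0 ≤ φ t := by
      have := h t ht1.le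
      simp only [hφdef]; linarith
    have hφ1 : φ 1 = 0 := by simp [hφdef]
    rw [slope_def_field, hφ1, sub_zero]
    exact div_nonneg hφt (by linarith)
  linarith

end AuxKS

section MainKS
open Set Topology

/-- the asymptotic-elasticity characterizations of Kramkov–Schachermayer type.
Part (a): if `AE_{+∞}(U) < 1` and `lim_{x→∞} U(x) > 0`, polynomial bounds hold at `+∞`, and
`AE_{+∞}(U)` is the infimum of admissible exponents. Part (b) is the analogue at `−∞`. -/
theorem asymptotic_elasticity_bounds (U : ℝ → ℝ)
    (hconc : ConcaveOn ℝ Set.univ U) (hmono : Monotone U) (hdiff : Differentiable ℝ U) :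
    ((limsup (fun x => x * deriv U x / U x) atTop < 1 ∧
        0 < limsup (fun x => (U x : EReal)) atTop) →
      ((∃ xb γ : ℝ, 0 < xb ∧ γ < 1 ∧ 0 < U xb ∧
          ∀ x : ℝ, xb ≤ x → ∀ lam : ℝ, 1 ≤ lam → U (lam * x) ≤ lam ^ γ * U x) ∧
        limsup (fun x => x * deriv U x / U x) atTop =
          sInf {γ : ℝ | ∃ xb : ℝ, 0 < xb ∧ 0 < U xb ∧
            ∀ x : ℝ, xb ≤ x → ∀ lam : ℝ, 1 ≤ lam → U (lam * x) ≤ lam ^ γ * U x})) ∧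
    (1 < liminf (fun x => x * deriv U x / U x) atBot →
      ((∃ xu γ' : ℝ, 0 < xu ∧ 1 < γ' ∧ U (-xu) < 0 ∧
          ∀ x : ℝ, x ≤ -xu → ∀ lam : ℝ, 1 ≤ lam → U (lam * x) ≤ lam ^ γ' * U x) ∧
        liminf (fun x => x * deriv U x / U x) atBot =
          sSup {γ' : ℝ | ∃ xu : ℝ, 0 < xu ∧ U (-xu) < 0 ∧
            ∀ x : ℝ, x ≤ -xu → ∀ lam : ℝ, 1 ≤ lam → U (lam * x) ≤ lam ^ γ' * U x})) := by
  
  have hdnn : ∀ x, 0 ≤ deriv U x := my_deriv_nonneg U hconc hmono hdiff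
  set R : ℝ → ℝ := fun x => x * deriv U x / U x with hRdef
  constructor
  · rintro ⟨hls, hU⟩
    have hex : ∃ y, 0 < U y := by
      by_contra hc
      push_neg at hc
      have hle : limsup (fun x => (U x : EReal)) atTop ≤ (0 : EReal) :=
        limsup_le_of_le (by isBoundedDefault)
          (Eventually.of_forall fun y => by exact_mod_cast hc y)
      exact absurd hU (not_lt.mpr hle)
    obtain ⟨y0, hy0⟩ := hex
    set a : ℝ := max y0 1 with hadef
    have ha1 : (1:ℝ) ≤ a := le_max_right _ _
    have hUa : ∀ z, a ≤ z → 0 < U z := fun z hz =>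
      lt_of_lt_of_le hy0 (hmono ((le_max_left y0 1).trans hz))
    have hR2 : ∀ z, 2 * a ≤ z → R z ≤ 2 := by
      intro z hz
      have hz0 : (0:ℝ) < z := by nlinarith
      have haz : a ≤ z / 2 := by linarith
      have hUz : 0 < U z := hUa z (by nlinarith)
      have htan := my_tangent U hconc hdiff z (z / 2)
      have hU2 : 0 < U (z / 2) := hUa _ haz
      have hnum : z * deriv U z ≤ 2 * U z := by nlinarith
      show z * deriv U z / U z ≤ 2
      rw [div_le_iff₀ hUz]; linarith
    have hT2 : ∀ᶠ z in atTop, R z ≤ 2 := eventually_atTop.mpr ⟨2*a, hR2⟩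
    set T : Set ℝ := {c | ∀ᶠ z in atTop, R z ≤ c} with hTdef
    have hTne : T.Nonempty := ⟨2, hT2⟩
    have hRpos : ∀ᶠ z in atTop, 0 ≤ R z := by
      refine eventually_atTop.mpr ⟨a, fun z hz => ?_⟩
      have hz0 : (0:ℝ) < z := lt_of_lt_of_le one_pos (ha1.trans hz)
      exact div_nonneg (mul_nonneg hz0.le (hdnn z)) (hUa z hz).le
    have hTbdd : BddBelow T := by
      refine ⟨0, fun c hc => ?_⟩
      obtain ⟨z, hz1, hz2⟩ := (hRpos.and hc).exists
      linarith
    have hlimsup_eq : limsup R atTop = sInf T := limsup_eq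
    have hmem : ∀ γ : ℝ, limsup R atTop < γ →
        ∃ xb : ℝ, 0 < xb ∧ 0 < U xb ∧
          ∀ x : ℝ, xb ≤ x → ∀ lam : ℝ, 1 ≤ lam → U (lam * x) ≤ lam ^ γ * U x := by
      intro γ hγ
      rw [hlimsup_eq] at hγ
      obtain ⟨c, hcT, hcγ⟩ := exists_lt_of_csInf_lt hTne hγ
      obtain ⟨x1, hx1⟩ := eventually_atTop.mp hcT
      refine ⟨max a x1, lt_of_lt_of_le one_pos (ha1.trans (le_max_left a x1)),
        hUa _ (le_max_left a x1), ?_⟩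
      intro x hx lam hlam
      have hxa : a ≤ x := (le_max_left a x1).trans hx
      have hx0 : (0:ℝ) < x := lt_of_lt_of_le one_pos (ha1.trans hxa)
      apply my_key_bound U hdiff γ x _ lam hlam
      intro t ht
      have htx : x ≤ t * x := le_mul_of_one_le_left hx0.le ht
      have htx1 : x1 ≤ t * x := ((le_max_right a x1).trans hx).trans htx
      have hUtx : 0 < U (t * x) := hUa _ (hxa.trans htx)
      have hr : (t*x) * deriv U (t*x) / U (t*x) ≤ c := hx1 (t * x) htx1
      rw [div_le_iff₀ hUtx] at hr
      nlinarith
    have hlower : ∀ γ ∈ {γ : ℝ | ∃ xb : ℝ, 0 < xb ∧ 0 < U xb ∧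
        ∀ x : ℝ, xb ≤ x → ∀ lam : ℝ, 1 ≤ lam → U (lam * x) ≤ lam ^ γ * U x},
        limsup R atTop ≤ γ := by
      rintro γ ⟨xb, hxb0, hUxb, hbd⟩
      have hev : ∀ᶠ x in atTop, R x ≤ γ := by
        refine eventually_atTop.mpr ⟨xb, fun x hx => ?_⟩
        have hUx : 0 < U x := lt_of_lt_of_le hUxb (hmono hx)
        have h1 := my_rev_bound U hdiff γ x (hbd x hx)
        show x * deriv U x / U x ≤ γ
        rw [div_le_iff₀ hUx]; linarith
      rw [hlimsup_eq]
      exact csInf_le hTbdd hev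
    refine ⟨?_, ?_⟩
    · obtain ⟨xb, h1, h2, h3⟩ := hmem ((limsup R atTop + 1)/2) (by linarith)
      exact ⟨xb, (limsup R atTop + 1)/2, h1, by linarith, h2, h3⟩
    · apply le_antisymm
      · exact le_csInf ⟨_, hmem ((limsup R atTop + 1)/2) (by linarith)⟩ hlower
      · by_contra hcon
        push_neg at hcon
        set I := sInf {γ : ℝ | ∃ xb : ℝ, 0 < xb ∧ 0 < U xb ∧
          ∀ x : ℝ, xb ≤ x → ∀ lam : ℝ, 1 ≤ lam → U (lam * x) ≤ lam ^ γ * U x} with hIdef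
        have h1 : limsup R atTop < (limsup R atTop + I)/2 := by linarith
        have h2 := hmem _ h1
        have h3 : I ≤ (limsup R atTop + I)/2 :=
          csInf_le ⟨limsup R atTop, fun γ hγ => hlower γ hγ⟩ h2
        linarith
  · intro hli
    set L : Set ℝ := {c | ∀ᶠ z in atBot, c ≤ R z} with hLdef
    have hliminf_eq : liminf R atBot = sSup L := liminf_eq
    have hLbdd : BddAbove L := by
      by_contra hc
      rw [hliminf_eq, Real.sSup_of_not_bddAbove hc] at hli; linarith
    have hLne : L.Nonempty := by
      by_contra hc
      rw [Set.not_nonempty_iff_eq_empty] at hc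
      rw [hliminf_eq, hc, Real.sSup_empty] at hli; linarith
    have hli' : ∀ b : ℝ, b < liminf R atBot → ∀ᶠ z in atBot, b < R z := by
      intro b hb
      rw [hliminf_eq] at hb
      obtain ⟨c, hcL, hc1⟩ := exists_lt_of_lt_csSup hLne hb
      filter_upwards [hcL] with z hz
      linarith
    have hmem : ∀ γ' : ℝ, γ' < liminf R atBot →
        ∃ xu : ℝ, 0 < xu ∧ U (-xu) < 0 ∧
          ∀ x : ℝ, x ≤ -xu → ∀ lam : ℝ, 1 ≤ lam → U (lam * x) ≤ lam ^ γ' * U x := by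
      intro γ' hγ'
      obtain ⟨x1, hx1⟩ := eventually_atBot.mp ((hli' γ' hγ').and (hli' 1 hli))
      set m : ℝ := min x1 (-1) with hmdef
      have hm : m ≤ -1 := min_le_right _ _
      have hkey : ∀ z : ℝ, z ≤ m → U z < 0 ∧ z * deriv U z ≤ γ' * U z := by
        intro z hz
        have hzx1 : z ≤ x1 := hz.trans (min_le_left _ _)
        have hz1 : z ≤ -1 := hz.trans (min_le_right _ _)
        obtain ⟨hγlt, h1lt⟩ := hx1 z hzx1
        have hRz : (1:ℝ) < z * deriv U z / U z := h1lt
        have hUz : U z < 0 := by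
          rcases lt_trichotomy (U z) 0 with h | h | h
          · exact h
          · rw [h, div_zero] at hRz; linarith
          · exfalso
            have hnum : z * deriv U z ≤ 0 :=
              mul_nonpos_of_nonpos_of_nonneg (by linarith) (hdnn z)
            have : z * deriv U z / U z ≤ 0 := div_nonpos_iff.mpr (Or.inr ⟨hnum, h.le⟩)
            linarith
        refine ⟨hUz, ?_⟩
        have h2 : γ' < z * deriv U z / U z := hγlt
        have h3 : z * deriv U z < γ' * U z := by
          rw [lt_div_iff_of_neg hUz] at h2
          linarith
        linarith
      refine ⟨-m, by linarith, ?_, ?_⟩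
      · have := (hkey m le_rfl).1
        simpa using this
      · intro x hx lam hlam
        have hxm : x ≤ m := by simpa using hx
        have hx0 : x < 0 := by linarith
        apply my_key_bound U hdiff γ' x _ lam hlam
        intro t ht
        have htx : t * x ≤ x := by nlinarith
        exact (hkey (t*x) (htx.trans hxm)).2
    have hupper : ∀ γ' ∈ {γ' : ℝ | ∃ xu : ℝ, 0 < xu ∧ U (-xu) < 0 ∧
        ∀ x : ℝ, x ≤ -xu → ∀ lam : ℝ, 1 ≤ lam → U (lam * x) ≤ lam ^ γ' * U x},
        γ' ≤ liminf R atBot := by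
      rintro γ' ⟨xu, hxu0, hUxu, hbd⟩
      have hev : ∀ᶠ x in atBot, γ' ≤ R x := by
        refine eventually_atBot.mpr ⟨-xu, fun x hx => ?_⟩
        have hUx : U x < 0 := lt_of_le_of_lt (hmono hx) hUxu
        have h1 := my_rev_bound U hdiff γ' x (hbd x hx)
        show γ' ≤ x * deriv U x / U x
        rw [le_div_iff_of_neg hUx]
        linarith
      rw [hliminf_eq]
      exact le_csSup hLbdd hev
    refine ⟨?_, ?_⟩
    · obtain ⟨xu, h1, h2, h3⟩ := hmem ((1 + liminf R atBot)/2) (by linarith)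
      exact ⟨xu, (1 + liminf R atBot)/2, h1, by linarith, h2, h3⟩
    · apply le_antisymm
      · by_contra hcon
        push_neg at hcon
        set Sv := sSup {γ' : ℝ | ∃ xu : ℝ, 0 < xu ∧ U (-xu) < 0 ∧
          ∀ x : ℝ, x ≤ -xu → ∀ lam : ℝ, 1 ≤ lam → U (lam * x) ≤ lam ^ γ' * U x} with hSvdef
        have h1 : (Sv + liminf R atBot)/2 < liminf R atBot := by linarith
        have h2 := hmem _ h1
        have h3 : (Sv + liminf R atBot)/2 ≤ Sv :=
          le_csSup ⟨liminf R atBot, fun γ hγ => hupper γ hγ⟩ h2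
        linarith
      · exact csSup_le ⟨_, hmem ((1 + liminf R atBot)/2) (by linarith)⟩ hupper

end MainKS
end

section
/- Let p ≥ 1, let P be a Borel probability measure on ℝ^d with finite p-th moment, let k > 0, let x₀ ≠ 0 be a real number, and let D ⊆ ℝ^d be non-empty and closed. Let U : ℝ → ℝ be non-decreasing and suppose there exist strictly positive constants x*, C, γ̲, γ̄ with γ̲ ≤ 1 ≤ γ̄ and γ̲ < γ̄ such that U(−x*) ≤ −(1 + C) and, for all x ∈ ℝ and all λ ≥ 1, U(λx) ≤ λ^{γ̲}(U(x) + C) and U(λx) ≤ λ^{γ̄}(U(x) + C). Assume also that there exists w* ∈ D with sup_{Q ∈ B_k(P)} E_Q[U⁻(x₀ + x₀⟨w*, X⟩)] < ∞. Then there exists K = K(x₀, w*) > 0 such that |w*| ≤ K and sup_{w ∈ D} inf_{Q ∈ B_k(P)} E_Q[U(x₀ + x₀⟨w, X⟩)] = sup_{w ∈ D, |w| ≤ K} inf_{Q ∈ B_k(P)} E_Q[U(x₀ + x₀⟨w, X⟩)]. -/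
open MeasureTheory Filter
open scoped ENNReal

noncomputable section

lemma rpow_subadd {a b γ : ℝ} (ha : 0 ≤ a) (hb : 0 ≤ b) (h0 : 0 ≤ γ) (h1 : γ ≤ 1) :
    (a + b) ^ γ ≤ a ^ γ + b ^ γ := by
  have := NNReal.rpow_add_le_add_rpow a.toNNReal b.toNNReal h0 h1
  have h := NNReal.coe_le_coe.mpr this
  push_cast [NNReal.coe_rpow] at h
  rwa [Real.coe_toNNReal a ha, Real.coe_toNNReal b hb] at h

set_option maxHeartbeats 2000000 in
theorem key_bound {d : ℕ} (p k x₀ : ℝ) (hp : 1 ≤ p) (hk : 0 < k) (hx₀ : x₀ ≠ 0)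
    (P : Measure (Evec d)) [IsProbabilityMeasure P]
    (hmom : (∫⁻ x, (‖x‖₊ : ℝ≥0∞) ^ p ∂P) < ⊤)
    (U : ℝ → ℝ) (hU : Monotone U)
    (xstar C γlo γhi : ℝ) (hxs : 0 < xstar) (hC : 0 < C)
    (hγlo : 0 < γlo) (hγhi : 0 < γhi) (h1 : γlo ≤ 1) (h2 : 1 ≤ γhi)
    (hUx : U (-xstar) ≤ -(1 + C))
    (hgrow : ∀ x lam : ℝ, 1 ≤ lam →
      U (lam * x) ≤ lam ^ γlo * (U x + C) ∧ U (lam * x) ≤ lam ^ γhi * (U x + C)) :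
    ∃ B₀ B₁ c₂ : ℝ, 0 < c₂ ∧ ∀ w : Evec d, 1 ≤ ‖w‖ → xstar / |x₀| ≤ ‖w‖ →
      uval p k x₀ P U w ≤ ((B₀ + B₁ * ‖w‖ ^ γlo - c₂ * ‖w‖ ^ γhi : ℝ) : EReal) := by
  have hp0 : (0:ℝ) < p := lt_of_lt_of_le one_pos hp
  have hx₀' : (0:ℝ) < |x₀| := abs_pos.mpr hx₀
  -- moment
  set m : ℝ := (∫⁻ x, (‖x‖₊ : ℝ≥0∞) ^ p ∂P).toReal with hm_def
  have hm0 : 0 ≤ m := ENNReal.toReal_nonneg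
  have hmE : (∫⁻ x, (‖x‖₊ : ℝ≥0∞) ^ p ∂P) = ENNReal.ofReal m :=
    (ENNReal.ofReal_toReal hmom.ne).symm
  have hnorm : ∀ y : Evec d, (‖y‖₊ : ℝ≥0∞) ^ p = ENNReal.ofReal (‖y‖ ^ p) := by
    intro y
    rw [← enorm_eq_nnnorm, ← ofReal_norm, ENNReal.ofReal_rpow_of_nonneg (norm_nonneg y) hp0.le]
  -- upper bound on U
  set c₀ : ℝ := |U xstar| + C with hc₀_def
  have hc₀ : 0 ≤ c₀ := by positivity
  set c₁ : ℝ := c₀ / xstar ^ γlo with hc₁_def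
  have hc₁ : 0 ≤ c₁ := by positivity
  have hUy : ∀ y : ℝ, U y ≤ c₀ + c₁ * |y| ^ γlo := by
    intro y
    rcases le_or_gt y xstar with h | h
    · have : U y ≤ |U xstar| := le_trans (hU h) (le_abs_self _)
      have h2' : 0 ≤ c₁ * |y| ^ γlo := by positivity
      nlinarith
    · have hyp : 0 < y := lt_trans hxs h
      have hl : 1 ≤ y / xstar := (one_le_div hxs).2 h.le
      have hg := (hgrow xstar (y / xstar) hl).1
      rw [div_mul_cancel₀ _ hxs.ne'] at hg
      have h4 : (y / xstar) ^ γlo * (U xstar + C) ≤ (y / xstar) ^ γlo * c₀ := by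
        apply mul_le_mul_of_nonneg_left _ (by positivity)
        have := le_abs_self (U xstar); simp [hc₀_def]; linarith
      have h5 : (y / xstar) ^ γlo * c₀ = c₁ * |y| ^ γlo := by
        rw [Real.div_rpow hyp.le hxs.le, abs_of_pos hyp, hc₁_def]; ring
      nlinarith [Real.rpow_nonneg (le_of_lt hyp) γlo]
  -- threshold and shift scale
  set T : ℝ := (2 * (m + 1)) ^ p⁻¹ with hT_def
  have hTpos : 0 < T := Real.rpow_pos_of_pos (by linarith) _
  have hTp : T ^ p = 2 * (m + 1) := Real.rpow_inv_rpow (by linarith) hp0.ne'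
  have hT1 : 1 ≤ T := by
    exact Real.one_le_rpow (by linarith) (by positivity)
  set t : ℝ := k + T + 2 with ht_def
  have ht0 : 0 < t := by linarith
  set θ : ℝ := (k / t) ^ p with hθ_def
  have hθ0 : 0 < θ := Real.rpow_pos_of_pos (div_pos hk ht0) _
  have hθ1 : θ ≤ 1 := Real.rpow_le_one (by positivity) (by rw [div_le_one ht0]; linarith) hp0.le
  -- constants
  set A₁ : ℝ := c₁ * |x₀| ^ γlo with hA₁_def
  have hA₁ : 0 ≤ A₁ := by positivity
  set M₂ : ℝ := m + 2 ^ p * (m + t ^ p) with hM₂_def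
  have hM₂0 : 0 ≤ M₂ := by positivity
  refine ⟨c₀ + A₁, A₁ * (1 + M₂), (θ / 2) * (|x₀| / xstar) ^ γhi, by positivity, ?_⟩
  intro w hw1 hw2
  -- helper: (a+b)^p ≤ 2^p (a^p + b^p)
  have add_rpow_le : ∀ a b : ℝ, 0 ≤ a → 0 ≤ b → (a + b) ^ p ≤ 2 ^ p * (a ^ p + b ^ p) := by
    intro a b ha hb
    have hmax : a + b ≤ 2 * max a b := by
      rcases le_total a b with h | h
      · rw [max_eq_right h]; linarith
      · rw [max_eq_left h]; linarith
    have h0 : (0:ℝ) ≤ max a b := le_trans ha (le_max_left a b)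
    calc (a + b) ^ p ≤ (2 * max a b) ^ p :=
          Real.rpow_le_rpow (by positivity) hmax hp0.le
      _ = 2 ^ p * (max a b) ^ p := Real.mul_rpow (by norm_num) h0
      _ ≤ 2 ^ p * (a ^ p + b ^ p) := by
          have hm : (max a b) ^ p ≤ a ^ p + b ^ p := by
            rcases le_total a b with h | h
            · rw [max_eq_right h]; nlinarith [Real.rpow_nonneg ha p]
            · rw [max_eq_left h]; nlinarith [Real.rpow_nonneg hb p]
          have h2p : (0:ℝ) ≤ 2 ^ p := Real.rpow_nonneg (by norm_num) p
          nlinarith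
  have hnw : (0:ℝ) < ‖w‖ := lt_of_lt_of_le one_pos hw1
  set e : Evec d := Real.sign x₀ • (‖w‖⁻¹ • w) with he_def
  have hsgn : |Real.sign x₀| = 1 := by
    rcases hx₀.lt_or_gt with h | h
    · rw [Real.sign_of_neg h]; norm_num
    · rw [Real.sign_of_pos h]; norm_num
  have hsgnx : x₀ * Real.sign x₀ = |x₀| := by
    rcases hx₀.lt_or_gt with h | h
    · rw [Real.sign_of_neg h, abs_of_neg h]; ring
    · rw [Real.sign_of_pos h, abs_of_pos h]; ring
  have he : ‖e‖ = 1 := by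
    rw [he_def, norm_smul, norm_smul, Real.norm_eq_abs, hsgn, Real.norm_eq_abs,
      abs_of_pos (inv_pos.mpr hnw)]
    field_simp
  have hwe : (inner ℝ w e : ℝ) = Real.sign x₀ * ‖w‖ := by
    rw [he_def, real_inner_smul_right, real_inner_smul_right,
      real_inner_self_eq_norm_mul_norm]
    field_simp
  have hex : ∀ x : Evec d, (inner ℝ e x : ℝ) = Real.sign x₀ * (‖w‖⁻¹ * (inner ℝ w x : ℝ)) := by
    intro x; rw [he_def, real_inner_smul_left, real_inner_smul_left]
  have hkey : ∀ x : Evec d, x₀ * (inner ℝ w x : ℝ) = |x₀| * ‖w‖ * (inner ℝ e x : ℝ) := by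
    intro x
    rw [hex]
    have : |x₀| * ‖w‖ * (Real.sign x₀ * (‖w‖⁻¹ * (inner ℝ w x : ℝ)))
        = (|x₀| * Real.sign x₀) * ((‖w‖ * ‖w‖⁻¹) * (inner ℝ w x : ℝ)) := by ring
    rw [this, mul_inv_cancel₀ hnw.ne', one_mul]
    rcases hx₀.lt_or_gt with h | h
    · rw [Real.sign_of_neg h, abs_of_neg h]; ring
    · rw [Real.sign_of_pos h, abs_of_pos h]; ring
  set f : Evec d → ℝ := fun x => U (x₀ + x₀ * (inner ℝ w x : ℝ)) with hf_def
  have hinner_cont : Continuous fun x : Evec d => (inner ℝ w x : ℝ) :=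
    continuous_const.inner continuous_id
  have hf : Measurable f :=
    hU.measurable.comp (continuous_const.add (continuous_const.mul hinner_cont)).measurable
  have hfe : Measurable fun x : Evec d => (inner ℝ e x : ℝ) :=
    (continuous_const.inner continuous_id).measurable
  set Tt : Evec d → Evec d := fun x => x - t • e with hTt_def
  have hTt : Measurable Tt := (continuous_id.sub continuous_const).measurable
  set Q : Measure (Evec d) :=
    ENNReal.ofReal (1 - θ) • P + ENNReal.ofReal θ • (P.map Tt) with hQ_def
  have hmapP : IsProbabilityMeasure (P.map Tt) := Measure.isProbabilityMeasure_map hTt.aemeasurable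
  have hsum : ENNReal.ofReal (1 - θ) + ENNReal.ofReal θ = 1 := by
    rw [← ENNReal.ofReal_add (by linarith) hθ0.le]; norm_num
  have hQprob : IsProbabilityMeasure Q := by
    constructor
    simp only [hQ_def, Measure.add_apply, Measure.smul_apply, smul_eq_mul, measure_univ, mul_one]
    exact hsum
  have hQint : ∀ g : Evec d → ℝ≥0∞, Measurable g →
      ∫⁻ x, g x ∂Q = ENNReal.ofReal (1 - θ) * ∫⁻ x, g x ∂P
        + ENNReal.ofReal θ * ∫⁻ x, g (Tt x) ∂P := by
    intro g hg
    rw [hQ_def, lintegral_add_measure, lintegral_smul_measure, lintegral_smul_measure,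
      lintegral_map hg hTt, smul_eq_mul, smul_eq_mul]
  have hmeasnp : Measurable fun x : Evec d => (‖x‖₊ : ℝ≥0∞) ^ p :=
    (measurable_nnnorm.coe_nnreal_ennreal).pow_const p
  have hmeasor : Measurable fun x : Evec d => ENNReal.ofReal (‖x‖ ^ p) :=
    (measurable_norm.pow_const p).ennreal_ofReal
  have hPor : (∫⁻ x, ENNReal.ofReal (‖x‖ ^ p) ∂P) = ENNReal.ofReal m := by
    rw [← hmE]; exact lintegral_congr fun x => (hnorm x).symm
  -- moment of shifted measure
  have hshift_mom : ∫⁻ x, (‖Tt x‖₊ : ℝ≥0∞) ^ p ∂P ≤ ENNReal.ofReal (2 ^ p * (m + t ^ p)) := by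
    have hpt : ∀ x : Evec d, (‖Tt x‖₊ : ℝ≥0∞) ^ p
        ≤ ENNReal.ofReal (2 ^ p * t ^ p) + ENNReal.ofReal (2 ^ p) * ENNReal.ofReal (‖x‖ ^ p) := by
      intro x
      rw [hnorm]
      have h1' : ‖Tt x‖ ≤ ‖x‖ + t := by
        calc ‖Tt x‖ ≤ ‖x‖ + ‖t • e‖ := norm_sub_le _ _
          _ = ‖x‖ + t := by rw [norm_smul, he, Real.norm_eq_abs, abs_of_pos ht0, mul_one]
      have h2' : ‖Tt x‖ ^ p ≤ (‖x‖ + t) ^ p := Real.rpow_le_rpow (norm_nonneg _) h1' hp0.le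
      have h3' := add_rpow_le ‖x‖ t (norm_nonneg x) ht0.le
      calc ENNReal.ofReal (‖Tt x‖ ^ p) ≤ ENNReal.ofReal (2 ^ p * (‖x‖ ^ p + t ^ p)) :=
            ENNReal.ofReal_le_ofReal (le_trans h2' h3')
        _ = ENNReal.ofReal (2 ^ p * t ^ p) + ENNReal.ofReal (2 ^ p) * ENNReal.ofReal (‖x‖ ^ p) := by
            rw [← ENNReal.ofReal_mul (by positivity),
              ← ENNReal.ofReal_add (by positivity) (by positivity)]
            congr 1; ring
    calc ∫⁻ x, (‖Tt x‖₊ : ℝ≥0∞) ^ p ∂P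
        ≤ ∫⁻ x, (ENNReal.ofReal (2 ^ p * t ^ p)
            + ENNReal.ofReal (2 ^ p) * ENNReal.ofReal (‖x‖ ^ p)) ∂P := lintegral_mono hpt
      _ = ENNReal.ofReal (2 ^ p * t ^ p) + ENNReal.ofReal (2 ^ p) * ENNReal.ofReal m := by
          rw [lintegral_add_left measurable_const, lintegral_const, measure_univ, mul_one,
            lintegral_const_mul _ hmeasor, hPor]
      _ = ENNReal.ofReal (2 ^ p * (m + t ^ p)) := by
          rw [← ENNReal.ofReal_mul (by positivity),
            ← ENNReal.ofReal_add (by positivity) (by positivity)]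
          congr 1; ring
  have hQmom : (∫⁻ x, (‖x‖₊ : ℝ≥0∞) ^ p ∂Q) ≤ ENNReal.ofReal M₂ := by
    rw [hQint _ hmeasnp, hmE]
    have e1 : ENNReal.ofReal (1 - θ) ≤ 1 := ENNReal.ofReal_le_one.mpr (by linarith)
    have e2 : ENNReal.ofReal θ ≤ 1 := ENNReal.ofReal_le_one.mpr hθ1
    calc ENNReal.ofReal (1 - θ) * ENNReal.ofReal m
          + ENNReal.ofReal θ * ∫⁻ x, (‖Tt x‖₊ : ℝ≥0∞) ^ p ∂P
        ≤ 1 * ENNReal.ofReal m + 1 * ENNReal.ofReal (2 ^ p * (m + t ^ p)) :=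
          add_le_add (mul_le_mul' e1 le_rfl) (mul_le_mul' e2 hshift_mom)
      _ = ENNReal.ofReal M₂ := by
          rw [one_mul, one_mul, ← ENNReal.ofReal_add hm0 (by positivity)]
  -- Wasserstein bound
  have hWQ : Wdist p P Q ≤ ENNReal.ofReal k := by
    set pi : Measure (Evec d × Evec d) :=
      ENNReal.ofReal (1 - θ) • (P.map fun x => (x, x))
        + ENNReal.ofReal θ • (P.map fun x => (x, Tt x)) with hpi_def
    have hm1 : Measurable fun x : Evec d => (x, x) := measurable_id.prodMk measurable_id
    have hm2 : Measurable fun x : Evec d => (x, Tt x) := measurable_id.prodMk hTt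
    have i1 : IsProbabilityMeasure (P.map fun x : Evec d => (x, x)) :=
      Measure.isProbabilityMeasure_map hm1.aemeasurable
    have i2 : IsProbabilityMeasure (P.map fun x : Evec d => (x, Tt x)) :=
      Measure.isProbabilityMeasure_map hm2.aemeasurable
    have hpic : pi ∈ couplings P Q := by
      refine ⟨?_, ?_, ?_⟩
      · constructor
        simp only [hpi_def, Measure.add_apply, Measure.smul_apply, smul_eq_mul, measure_univ,
          mul_one]
        exact hsum
      · rw [hpi_def, Measure.map_add _ _ measurable_fst, Measure.map_smul, Measure.map_smul,
          Measure.map_map measurable_fst hm1, Measure.map_map measurable_fst hm2,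
          show (Prod.fst ∘ fun x : Evec d => (x, x)) = id from rfl,
          show (Prod.fst ∘ fun x : Evec d => (x, Tt x)) = id from rfl, Measure.map_id,
          ← add_smul, hsum, one_smul]
      · rw [hpi_def, Measure.map_add _ _ measurable_snd, Measure.map_smul, Measure.map_smul,
          Measure.map_map measurable_snd hm1, Measure.map_map measurable_snd hm2,
          show (Prod.snd ∘ fun x : Evec d => (x, x)) = id from rfl,
          show (Prod.snd ∘ fun x : Evec d => (x, Tt x)) = Tt from rfl, Measure.map_id]
    have hmeasc : Measurable fun z : Evec d × Evec d => (‖z.1 - z.2‖₊ : ℝ≥0∞) ^ p :=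
      (((measurable_fst.sub measurable_snd).nnnorm).coe_nnreal_ennreal).pow_const p
    have hcost : (∫⁻ z, (‖z.1 - z.2‖₊ : ℝ≥0∞) ^ p ∂pi) = ENNReal.ofReal (k ^ p) := by
      rw [hpi_def, lintegral_add_measure, lintegral_smul_measure, lintegral_smul_measure,
        lintegral_map hmeasc hm1, lintegral_map hmeasc hm2]
      have e1 : (fun x : Evec d => (‖(x, x).1 - (x, x).2‖₊ : ℝ≥0∞) ^ p) = fun _ => 0 := by
        funext x
        simp only [sub_self, nnnorm_zero, ENNReal.coe_zero]
        exact ENNReal.zero_rpow_of_pos hp0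
      have e2 : (fun x : Evec d => (‖(x, Tt x).1 - (x, Tt x).2‖₊ : ℝ≥0∞) ^ p)
          = fun _ => ENNReal.ofReal (t ^ p) := by
        funext x
        have hxx : (x, Tt x).1 - (x, Tt x).2 = t • e := by
          simp [hTt_def]
        rw [hxx, hnorm]
        congr 1
        rw [norm_smul, he, Real.norm_eq_abs, abs_of_pos ht0, mul_one]
      rw [e1, e2, lintegral_zero, lintegral_const, measure_univ, mul_one, smul_zero, zero_add, smul_eq_mul,
        ← ENNReal.ofReal_mul hθ0.le]
      congr 1
      rw [hθ_def, ← Real.mul_rpow (by positivity) ht0.le, div_mul_cancel₀ _ ht0.ne']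
    have hwle : Wdist p P Q ≤ (∫⁻ z, (‖z.1 - z.2‖₊ : ℝ≥0∞) ^ p ∂pi) ^ (1 / p) := by
      simp only [Wdist]
      exact iInf₂_le pi hpic
    rw [hcost] at hwle
    refine hwle.trans (le_of_eq ?_)
    rw [show ENNReal.ofReal (k ^ p) = ENNReal.ofReal k ^ p from
      (ENNReal.ofReal_rpow_of_nonneg hk.le hp0.le).symm, one_div,
      ENNReal.rpow_rpow_inv hp0.ne']
  have hQball : Q ∈ wBall p k P := ⟨hQprob, lt_of_le_of_lt hQmom ENNReal.ofReal_lt_top, hWQ⟩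
  -- Markov / event A
  set A : Set (Evec d) := {x | (inner ℝ e x : ℝ) ≤ T} with hA_def
  have hAmeas : MeasurableSet A := measurableSet_le hfe measurable_const
  have hPA : ENNReal.ofReal (1 / 2) ≤ P A := by
    have hPAc : P Aᶜ ≤ ENNReal.ofReal (1 / 2) := by
      have hsub : Aᶜ ⊆ {x : Evec d | ENNReal.ofReal (2 * (m + 1)) ≤ (‖x‖₊ : ℝ≥0∞) ^ p} := by
        intro x hx
        simp only [hA_def, Set.mem_compl_iff, Set.mem_setOf_eq, not_le] at hx
        have h1' : T ≤ ‖x‖ := by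
          have h := real_inner_le_norm e x
          rw [he, one_mul] at h
          linarith
        have h2' : T ^ p ≤ ‖x‖ ^ p := Real.rpow_le_rpow hTpos.le h1' hp0.le
        rw [Set.mem_setOf_eq, hnorm, ← hTp]
        exact ENNReal.ofReal_le_ofReal h2'
      have hmar := mul_meas_ge_le_lintegral₀ (μ := P) hmeasnp.aemeasurable
        (ENNReal.ofReal (2 * (m + 1)))
      rw [hmE] at hmar
      have hne : ENNReal.ofReal (2 * (m + 1)) ≠ 0 := by
        simp only [ne_eq, ENNReal.ofReal_eq_zero, not_le]
        linarith
      calc P Aᶜ ≤ P {x : Evec d | ENNReal.ofReal (2 * (m + 1)) ≤ (‖x‖₊ : ℝ≥0∞) ^ p} :=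
            measure_mono hsub
        _ ≤ ENNReal.ofReal m / ENNReal.ofReal (2 * (m + 1)) := by
            rw [ENNReal.le_div_iff_mul_le (Or.inl hne) (Or.inl ENNReal.ofReal_ne_top), mul_comm]
            exact hmar
        _ = ENNReal.ofReal (m / (2 * (m + 1))) := (ENNReal.ofReal_div_of_pos (by linarith)).symm
        _ ≤ ENNReal.ofReal (1 / 2) := by
            apply ENNReal.ofReal_le_ofReal
            rw [div_le_div_iff₀ (by linarith) (by norm_num)]
            linarith
    have hc : P A + P Aᶜ = 1 := by
      rw [measure_add_measure_compl (μ := P) hAmeas, measure_univ]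
    have h12 : (1 : ℝ≥0∞) - ENNReal.ofReal (1 / 2) = ENNReal.ofReal (1 / 2) := by
      rw [← ENNReal.ofReal_one, ← ENNReal.ofReal_sub _ (by norm_num)]
      norm_num
    have hup : (1 : ℝ≥0∞) - P Aᶜ ≤ P A := by
      rw [← hc, ENNReal.add_sub_cancel_right (measure_ne_top P Aᶜ)]
    calc ENNReal.ofReal (1 / 2) = 1 - ENNReal.ofReal (1 / 2) := h12.symm
      _ ≤ 1 - P Aᶜ := tsub_le_tsub_left hPAc 1
      _ ≤ P A := hup
  -- the negative part lower bound
  set lam : ℝ := |x₀| * ‖w‖ / xstar with hlam_def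
  have hlam1 : 1 ≤ lam := by
    rw [hlam_def, le_div_iff₀ hxs]
    have := (div_le_iff₀ hx₀').mp hw2
    nlinarith
  have hlampos : (0:ℝ) < lam := lt_of_lt_of_le one_pos hlam1
  have honA : ∀ x ∈ A, lam ^ γhi ≤ -(f (Tt x)) := by
    intro x hx
    have hxA : (inner ℝ e x : ℝ) ≤ T := hx
    have hiw : (inner ℝ w (Tt x) : ℝ) = (inner ℝ w x : ℝ) - t * (inner ℝ w e : ℝ) := by
      simp only [hTt_def, inner_sub_right, real_inner_smul_right]
    have harg : x₀ + x₀ * (inner ℝ w (Tt x) : ℝ)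
        = x₀ + |x₀| * ‖w‖ * ((inner ℝ e x : ℝ) - t) := by
      rw [hiw, hwe]
      have : x₀ * ((inner ℝ w x : ℝ) - t * (Real.sign x₀ * ‖w‖))
          = x₀ * (inner ℝ w x : ℝ) - (x₀ * Real.sign x₀) * (t * ‖w‖) := by ring
      rw [this, hsgnx, hkey x]
      ring
    have hble : x₀ + |x₀| * ‖w‖ * ((inner ℝ e x : ℝ) - t) ≤ lam * -xstar := by
      have hxle : x₀ ≤ |x₀| := le_abs_self x₀
      have h1' : |x₀| ≤ |x₀| * ‖w‖ := by nlinarith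
      have hlamx : lam * -xstar = -(|x₀| * ‖w‖) := by
        rw [hlam_def]; field_simp
      have hkt : (inner ℝ e x : ℝ) - t ≤ -(k + 2) := by
        rw [ht_def]; linarith
      have := mul_le_mul_of_nonneg_left hkt (by positivity : (0:ℝ) ≤ |x₀| * ‖w‖)
      rw [hlamx]
      nlinarith
    have hUb := (hgrow (-xstar) lam hlam1).2
    have hchain : f (Tt x) ≤ -lam ^ γhi := by
      have hmono : f (Tt x) ≤ U (lam * -xstar) := by
        simp only [hf_def]
        rw [harg] at *
        exact hU hble
      have h2' : lam ^ γhi * (U (-xstar) + C) ≤ lam ^ γhi * (-1) := by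
        apply mul_le_mul_of_nonneg_left _ (Real.rpow_nonneg hlampos.le _)
        linarith
      have : U (lam * -xstar) ≤ -lam ^ γhi := by
        have := hUb
        rw [show lam * -xstar = lam * -xstar from rfl] at this
        nlinarith
      linarith
    linarith
  have hmeasnf : Measurable fun x : Evec d => ENNReal.ofReal (-(f x)) := hf.neg.ennreal_ofReal
  have hnegQ : ENNReal.ofReal (θ / 2 * lam ^ γhi) ≤ ∫⁻ x, ENNReal.ofReal (-(f x)) ∂Q := by
    rw [hQint _ hmeasnf]
    have hstep : ENNReal.ofReal (lam ^ γhi) * ENNReal.ofReal (1 / 2)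
        ≤ ∫⁻ x, ENNReal.ofReal (-(f (Tt x))) ∂P := by
      have hind : ∀ x, A.indicator (fun _ => ENNReal.ofReal (lam ^ γhi)) x
          ≤ ENNReal.ofReal (-(f (Tt x))) := by
        intro x
        by_cases hx : x ∈ A
        · rw [Set.indicator_of_mem hx]
          exact ENNReal.ofReal_le_ofReal (honA x hx)
        · rw [Set.indicator_of_notMem hx]
          exact zero_le
      calc ENNReal.ofReal (lam ^ γhi) * ENNReal.ofReal (1 / 2)
          ≤ ENNReal.ofReal (lam ^ γhi) * P A := mul_le_mul' le_rfl hPA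
        _ = ∫⁻ x, A.indicator (fun _ => ENNReal.ofReal (lam ^ γhi)) x ∂P :=
            (lintegral_indicator_const hAmeas _).symm
        _ ≤ _ := lintegral_mono hind
    calc ENNReal.ofReal (θ / 2 * lam ^ γhi)
        = ENNReal.ofReal θ * (ENNReal.ofReal (lam ^ γhi) * ENNReal.ofReal (1 / 2)) := by
          rw [← ENNReal.ofReal_mul (Real.rpow_nonneg hlampos.le _),
            ← ENNReal.ofReal_mul hθ0.le]
          congr 1; ring
      _ ≤ ENNReal.ofReal θ * ∫⁻ x, ENNReal.ofReal (-(f (Tt x))) ∂P := mul_le_mul' le_rfl hstep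
      _ ≤ _ := le_add_self
  -- positive part upper bound
  set s : ℝ := ‖w‖ ^ γlo with hs_def
  have hs0 : 0 ≤ s := Real.rpow_nonneg (norm_nonneg w) _
  have hfx : ∀ x : Evec d, f x ≤ (c₀ + A₁ + A₁ * s) + A₁ * s * ‖x‖ ^ p := by
    intro x
    have hu1 := hUy (x₀ + x₀ * (inner ℝ w x : ℝ))
    have h2' : |x₀ + x₀ * (inner ℝ w x : ℝ)| ≤ |x₀| * (1 + ‖w‖ * ‖x‖) := by
      have hfac : x₀ + x₀ * (inner ℝ w x : ℝ) = x₀ * (1 + (inner ℝ w x : ℝ)) := by ring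
      rw [hfac, abs_mul]
      apply mul_le_mul_of_nonneg_left _ (abs_nonneg x₀)
      calc |1 + (inner ℝ w x : ℝ)| ≤ |(1:ℝ)| + |(inner ℝ w x : ℝ)| := abs_add_le _ _
        _ ≤ 1 + ‖w‖ * ‖x‖ := by
            have := abs_real_inner_le_norm w x
            simp only [abs_one]
            linarith
    have h3' : |x₀ + x₀ * (inner ℝ w x : ℝ)| ^ γlo ≤ (|x₀| * (1 + ‖w‖ * ‖x‖)) ^ γlo :=
      Real.rpow_le_rpow (abs_nonneg _) h2' hγlo.le
    have h4' : (|x₀| * (1 + ‖w‖ * ‖x‖)) ^ γlo = |x₀| ^ γlo * (1 + ‖w‖ * ‖x‖) ^ γlo :=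
      Real.mul_rpow (abs_nonneg _) (by positivity)
    have h5' : (1 + ‖w‖ * ‖x‖) ^ γlo ≤ 1 + (‖w‖ * ‖x‖) ^ γlo := by
      have := rpow_subadd (le_of_lt one_pos) (by positivity : (0:ℝ) ≤ ‖w‖ * ‖x‖) hγlo.le h1
      simpa [Real.one_rpow] using this
    have h6' : (‖w‖ * ‖x‖) ^ γlo = s * ‖x‖ ^ γlo :=
      Real.mul_rpow (norm_nonneg _) (norm_nonneg _)
    have h7' : ‖x‖ ^ γlo ≤ 1 + ‖x‖ ^ p := by
      rcases le_total ‖x‖ 1 with h | h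
      · have ha := Real.rpow_le_one (norm_nonneg x) h hγlo.le
        have hb := Real.rpow_nonneg (norm_nonneg x) p
        linarith
      · have := Real.rpow_le_rpow_of_exponent_le h (le_trans h1 hp)
        linarith
    have hx0g : (0:ℝ) ≤ |x₀| ^ γlo := Real.rpow_nonneg (abs_nonneg _) _
    have hA' : |x₀ + x₀ * (inner ℝ w x : ℝ)| ^ γlo ≤ |x₀| ^ γlo * (1 + s * ‖x‖ ^ γlo) := by
      refine h3'.trans ?_
      rw [h4']
      apply mul_le_mul_of_nonneg_left _ hx0g
      calc (1 + ‖w‖ * ‖x‖) ^ γlo ≤ 1 + (‖w‖ * ‖x‖) ^ γlo := h5'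
        _ = 1 + s * ‖x‖ ^ γlo := by rw [h6']
    have hB' : |x₀| ^ γlo * (1 + s * ‖x‖ ^ γlo) ≤ |x₀| ^ γlo * (1 + s * (1 + ‖x‖ ^ p)) := by
      apply mul_le_mul_of_nonneg_left _ hx0g
      have := mul_le_mul_of_nonneg_left h7' hs0
      linarith
    calc f x ≤ c₀ + c₁ * |x₀ + x₀ * (inner ℝ w x : ℝ)| ^ γlo := hu1
      _ ≤ c₀ + c₁ * (|x₀| ^ γlo * (1 + s * (1 + ‖x‖ ^ p))) := by
          have := mul_le_mul_of_nonneg_left (hA'.trans hB') hc₁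
          linarith
      _ = (c₀ + A₁ + A₁ * s) + A₁ * s * ‖x‖ ^ p := by
          rw [hA₁_def]; ring
  have hBc0 : (0:ℝ) ≤ c₀ + A₁ + A₁ * s := by positivity
  have hposQ : ∫⁻ x, ENNReal.ofReal (f x) ∂Q
      ≤ ENNReal.ofReal ((c₀ + A₁ + A₁ * s) + A₁ * s * M₂) := by
    have hpt : ∀ x : Evec d, ENNReal.ofReal (f x)
        ≤ ENNReal.ofReal (c₀ + A₁ + A₁ * s)
          + ENNReal.ofReal (A₁ * s) * ENNReal.ofReal (‖x‖ ^ p) := by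
      intro x
      calc ENNReal.ofReal (f x)
          ≤ ENNReal.ofReal ((c₀ + A₁ + A₁ * s) + A₁ * s * ‖x‖ ^ p) :=
            ENNReal.ofReal_le_ofReal (hfx x)
        _ = _ := by
            rw [ENNReal.ofReal_add hBc0 (by positivity), ENNReal.ofReal_mul (by positivity)]
    have hQnorm : ∫⁻ x, ENNReal.ofReal (‖x‖ ^ p) ∂Q ≤ ENNReal.ofReal M₂ := by
      calc ∫⁻ x, ENNReal.ofReal (‖x‖ ^ p) ∂Q = ∫⁻ x, (‖x‖₊ : ℝ≥0∞) ^ p ∂Q :=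
            lintegral_congr fun x => (hnorm x).symm
        _ ≤ ENNReal.ofReal M₂ := hQmom
    calc ∫⁻ x, ENNReal.ofReal (f x) ∂Q
        ≤ ∫⁻ x, (ENNReal.ofReal (c₀ + A₁ + A₁ * s)
            + ENNReal.ofReal (A₁ * s) * ENNReal.ofReal (‖x‖ ^ p)) ∂Q := lintegral_mono hpt
      _ = ENNReal.ofReal (c₀ + A₁ + A₁ * s)
            + ENNReal.ofReal (A₁ * s) * ∫⁻ x, ENNReal.ofReal (‖x‖ ^ p) ∂Q := by
          rw [lintegral_add_left measurable_const, lintegral_const, measure_univ, mul_one,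
            lintegral_const_mul _ hmeasor]
      _ ≤ ENNReal.ofReal (c₀ + A₁ + A₁ * s) + ENNReal.ofReal (A₁ * s) * ENNReal.ofReal M₂ :=
          add_le_add le_rfl (mul_le_mul' le_rfl hQnorm)
      _ = ENNReal.ofReal ((c₀ + A₁ + A₁ * s) + A₁ * s * M₂) := by
          rw [← ENNReal.ofReal_mul (by positivity), ← ENNReal.ofReal_add hBc0 (by positivity)]
  -- conclude
  have hle : uval p k x₀ P U w ≤ eexp Q f := by
    simp only [uval]
    exact iInf₂_le Q hQball
  refine hle.trans ?_
  have hposE : ((∫⁻ x, ENNReal.ofReal (f x) ∂Q : ℝ≥0∞) : EReal)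
      ≤ ((ENNReal.ofReal ((c₀ + A₁ + A₁ * s) + A₁ * s * M₂) : ℝ≥0∞) : EReal) :=
    EReal.coe_ennreal_le_coe_ennreal_iff.mpr hposQ
  have hnegE : ((ENNReal.ofReal (θ / 2 * lam ^ γhi) : ℝ≥0∞) : EReal)
      ≤ ((∫⁻ x, ENNReal.ofReal (-(f x)) ∂Q : ℝ≥0∞) : EReal) :=
    EReal.coe_ennreal_le_coe_ennreal_iff.mpr hnegQ
  have hsubE := EReal.sub_le_sub hposE hnegE
  refine le_trans hsubE (le_of_eq ?_)
  rw [EReal.coe_ennreal_ofReal, EReal.coe_ennreal_ofReal,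
    max_eq_left (by positivity : (0:ℝ) ≤ (c₀ + A₁ + A₁ * s) + A₁ * s * M₂),
    max_eq_left (by positivity : (0:ℝ) ≤ θ / 2 * lam ^ γhi), ← EReal.coe_sub]
  norm_cast
  have hlamr : lam ^ γhi = (|x₀| / xstar) ^ γhi * ‖w‖ ^ γhi := by
    rw [hlam_def, show |x₀| * ‖w‖ / xstar = |x₀| / xstar * ‖w‖ by ring,
      Real.mul_rpow (by positivity) (norm_nonneg w)]
  rw [hlamr, hs_def]
  ring


set_option maxHeartbeats 2000000 in
/-- restriction to bounded weights. Under the two-sided growth bounds on `U`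
and a finiteness assumption at some `w* ∈ D`, the robust value is unchanged when restricting
to weights of norm at most `K`, for some `K > 0` with `|w*| ≤ K`. -/
theorem restrict_to_bounded_weights {d : ℕ} (p k x₀ : ℝ) (hp : 1 ≤ p) (hk : 0 < k)
    (hx₀ : x₀ ≠ 0) (P : Measure (Evec d)) [IsProbabilityMeasure P]
    (hmom : (∫⁻ x, (‖x‖₊ : ℝ≥0∞) ^ p ∂P) < ⊤)
    (D : Set (Evec d)) (hD : D.Nonempty) (hDc : IsClosed D)
    (U : ℝ → ℝ) (hU : Monotone U)
    (xstar C γlo γhi : ℝ) (hxs : 0 < xstar) (hC : 0 < C)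
    (hγlo : 0 < γlo) (hγhi : 0 < γhi) (h1 : γlo ≤ 1) (h2 : 1 ≤ γhi) (h3 : γlo < γhi)
    (hUx : U (-xstar) ≤ -(1 + C))
    (hgrow : ∀ x lam : ℝ, 1 ≤ lam →
      U (lam * x) ≤ lam ^ γlo * (U x + C) ∧ U (lam * x) ≤ lam ^ γhi * (U x + C))
    (wstar : Evec d) (hws : wstar ∈ D)
    (hfin : (⨆ Q ∈ wBall p k P,
      ∫⁻ x, ENNReal.ofReal (-(U (x₀ + x₀ * (inner ℝ wstar x : ℝ)))) ∂Q) < ⊤) :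
    ∃ K : ℝ, 0 < K ∧ ‖wstar‖ ≤ K ∧
      (⨆ w ∈ D, uval p k x₀ P U w) = ⨆ w ∈ {v ∈ D | ‖v‖ ≤ K}, uval p k x₀ P U w := by
  have hp0 : (0:ℝ) < p := lt_of_lt_of_le one_pos hp
  have hx₀' : (0:ℝ) < |x₀| := abs_pos.mpr hx₀
  set S : ℝ := (⨆ Q ∈ wBall p k P,
      ∫⁻ x, ENNReal.ofReal (-(U (x₀ + x₀ * (inner ℝ wstar x : ℝ)))) ∂Q).toReal with hS_def
  have hS0 : 0 ≤ S := ENNReal.toReal_nonneg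
  have hSle : ∀ Q ∈ wBall p k P,
      (∫⁻ x, ENNReal.ofReal (-(U (x₀ + x₀ * (inner ℝ wstar x : ℝ)))) ∂Q) ≤ ENNReal.ofReal S := by
    intro Q hQ
    rw [hS_def, ENNReal.ofReal_toReal hfin.ne]
    exact le_biSup (fun Q => ∫⁻ x, ENNReal.ofReal (-(U (x₀ + x₀ * (inner ℝ wstar x : ℝ)))) ∂Q) hQ
  have hws_lb : ((-S : ℝ) : EReal) ≤ uval p k x₀ P U wstar := by
    simp only [uval]
    apply le_iInf₂
    intro Q hQ
    simp only [eexp]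
    have hneg : ((∫⁻ x, ENNReal.ofReal (-(U (x₀ + x₀ * (inner ℝ wstar x : ℝ)))) ∂Q : ℝ≥0∞) : EReal)
        ≤ ((S : ℝ) : EReal) := by
      refine (EReal.coe_ennreal_le_coe_ennreal_iff.mpr (hSle Q hQ)).trans (le_of_eq ?_)
      rw [EReal.coe_ennreal_ofReal, max_eq_left hS0]
    have hpos : (0 : EReal)
        ≤ ((∫⁻ x, ENNReal.ofReal (U (x₀ + x₀ * (inner ℝ wstar x : ℝ))) ∂Q : ℝ≥0∞) : EReal) :=
      EReal.coe_ennreal_nonneg _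
    have hsub := EReal.sub_le_sub hpos hneg
    calc ((-S : ℝ) : EReal) = (0 : EReal) - ((S : ℝ) : EReal) := by
          rw [zero_sub, ← EReal.coe_neg]
      _ ≤ _ := hsub
  obtain ⟨B₀, B₁, c₂, hc₂, hbound⟩ := key_bound p k x₀ hp hk hx₀ P hmom U hU
    xstar C γlo γhi hxs hC hγlo hγhi h1 h2 hUx hgrow
  have htend : Tendsto (fun r : ℝ => B₀ + B₁ * r ^ γlo - c₂ * r ^ γhi) atTop atBot := by
    have h0 : Tendsto (fun r : ℝ => r ^ (-(γhi - γlo))) atTop (nhds 0) :=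
      tendsto_rpow_neg_atTop (by linarith)
    have hbb : Tendsto (fun r : ℝ => B₁ * r ^ (-(γhi - γlo)) - c₂) atTop
        (nhds (B₁ * 0 - c₂)) := (h0.const_mul B₁).sub tendsto_const_nhds
    have hglim : B₁ * 0 - c₂ < 0 := by linarith
    have hrt : Tendsto (fun r : ℝ => r ^ γhi) atTop atTop := tendsto_rpow_atTop hγhi
    have hmul : Tendsto (fun r : ℝ => r ^ γhi * (B₁ * r ^ (-(γhi - γlo)) - c₂)) atTop atBot :=
      Filter.Tendsto.atTop_mul_neg hglim hrt hbb
    have hadd : Tendsto (fun r : ℝ => B₀ + r ^ γhi * (B₁ * r ^ (-(γhi - γlo)) - c₂))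
        atTop atBot := tendsto_atBot_add_const_left _ B₀ hmul
    refine hadd.congr' ?_
    filter_upwards [eventually_gt_atTop (0:ℝ)] with r hr
    have hpow : r ^ γhi * r ^ (-(γhi - γlo)) = r ^ γlo := by
      rw [← Real.rpow_add hr]
      congr 1
      ring
    calc B₀ + r ^ γhi * (B₁ * r ^ (-(γhi - γlo)) - c₂)
        = B₀ + B₁ * (r ^ γhi * r ^ (-(γhi - γlo))) - c₂ * r ^ γhi := by ring
      _ = B₀ + B₁ * r ^ γlo - c₂ * r ^ γhi := by rw [hpow]
  obtain ⟨K₀, hK₀⟩ := eventually_atTop.mp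
    (htend.eventually (eventually_le_atBot (-S)))
  set K : ℝ := max K₀ (max (max 1 (xstar / |x₀|)) ‖wstar‖) with hK_def
  have hK1 : (1:ℝ) ≤ K := le_max_of_le_right (le_max_of_le_left (le_max_left _ _))
  have hKx : xstar / |x₀| ≤ K := le_max_of_le_right (le_max_of_le_left (le_max_right _ _))
  have hKw : ‖wstar‖ ≤ K := le_max_of_le_right (le_max_right _ _)
  have hKK₀ : K₀ ≤ K := le_max_left _ _
  refine ⟨K, lt_of_lt_of_le one_pos hK1, hKw, ?_⟩
  apply le_antisymm
  · apply iSup₂_le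
    intro w hw
    by_cases hwK : ‖w‖ ≤ K
    · exact le_biSup _ ⟨hw, hwK⟩
    · push_neg at hwK
      have hb := hbound w (le_trans hK1 hwK.le) (le_trans hKx hwK.le)
      have hφ : B₀ + B₁ * ‖w‖ ^ γlo - c₂ * ‖w‖ ^ γhi ≤ -S :=
        hK₀ ‖w‖ (le_trans hKK₀ hwK.le)
      calc uval p k x₀ P U w
          ≤ ((B₀ + B₁ * ‖w‖ ^ γlo - c₂ * ‖w‖ ^ γhi : ℝ) : EReal) := hb
        _ ≤ ((-S : ℝ) : EReal) := by exact_mod_cast hφ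
        _ ≤ uval p k x₀ P U wstar := hws_lb
        _ ≤ _ := le_biSup (fun v => uval p k x₀ P U v)
            (show wstar ∈ {v ∈ D | ‖v‖ ≤ K} from ⟨hws, hKw⟩)
  · apply iSup₂_le
    intro w hw
    exact le_biSup _ hw.1
end
end

section
/- Let p ≥ 1, let P be a Borel probability measure on ℝ^d with finite p-th moment, let k > 0, let x₀ ≠ 0 be a real number, and let D ⊆ ℝ^d be non-empty and closed. Let U : ℝ → ℝ be non-decreasing, continuous, bounded from above, with lim_{x→−∞} U(x) = −∞, and assume there exists w* ∈ D with u(k, w*) := inf_{Q ∈ B_k(P)} E_Q[U(x₀ + x₀⟨w*, X⟩)] > −∞. Then there exists K = K(x₀, w*) > 0 such that |w*| ≤ K and sup_{w ∈ D} u(k,w) = sup_{w ∈ D, |w| ≤ K} u(k,w); furthermore the supremum is attained at some w_k ∈ D with |w_k| ≤ K. -/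
open MeasureTheory Filter
open scoped ENNReal

noncomputable section

open scoped Topology

lemma self_mem_wBall {d : ℕ} (p k : ℝ) (hp : 0 < p) (hk : 0 ≤ k) (P : Measure (Evec d))
    [IsProbabilityMeasure P] (hmom : (∫⁻ x, (‖x‖₊ : ℝ≥0∞) ^ p ∂P) < ⊤) :
    P ∈ wBall p k P := by
  refine ⟨inferInstance, hmom, ?_⟩
  have hdm : Measurable (fun x : Evec d => (x, x)) := measurable_id.prodMk measurable_id
  have hc : P.map (fun x => (x, x)) ∈ couplings P P := by
    refine ⟨Measure.isProbabilityMeasure_map hdm.aemeasurable, ?_, ?_⟩ <;>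
      simp [Measure.map_map (by measurability : Measurable (Prod.fst : Evec d × Evec d → Evec d)) hdm, Measure.map_map (by measurability : Measurable (Prod.snd : Evec d × Evec d → Evec d)) hdm, Function.comp_def]
  have hle := iInf₂_le (f := fun π _ => (∫⁻ z, (‖z.1 - z.2‖₊ : ℝ≥0∞) ^ p ∂π) ^ (1 / p))
    (P.map (fun x => (x, x))) hc
  refine le_trans hle ?_
  have : ∫⁻ z, (‖z.1 - z.2‖₊ : ℝ≥0∞) ^ p ∂(P.map (fun x => (x, x))) = 0 := by
    rw [lintegral_map (by measurability) hdm]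
    simp [ENNReal.zero_rpow_of_pos hp]
  rw [this, ENNReal.zero_rpow_of_pos (by positivity)]
  exact zero_le

lemma eexp_le_of_le {α : Type*} [MeasurableSpace α] (Q : Measure α) [IsProbabilityMeasure Q]
    {f : α → ℝ} {M : ℝ} (hM : 0 ≤ M) (hf : ∀ x, f x ≤ M) : eexp Q f ≤ (M : EReal) := by
  have h1 : (∫⁻ x, ENNReal.ofReal (f x) ∂Q) ≤ ENNReal.ofReal M := by
    calc (∫⁻ x, ENNReal.ofReal (f x) ∂Q) ≤ ∫⁻ _, ENNReal.ofReal M ∂Q :=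
          lintegral_mono fun x => ENNReal.ofReal_le_ofReal (hf x)
    _ = ENNReal.ofReal M := by simp
  have h2 : eexp Q f ≤ ((ENNReal.ofReal M : ℝ≥0∞) : EReal) - ((0 : ℝ≥0∞) : EReal) :=
    EReal.sub_le_sub (EReal.coe_ennreal_le_coe_ennreal_iff.2 h1)
      (by exact_mod_cast zero_le)
  refine h2.trans ?_
  rw [EReal.coe_ennreal_ofReal, max_eq_left hM]
  simp

lemma uval_le_eexp {d : ℕ} {p k x₀ : ℝ} {P Q : Measure (Evec d)} {U : ℝ → ℝ} {w : Evec d}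
    (hQ : Q ∈ wBall p k P) :
    uval p k x₀ P U w ≤ eexp Q (fun x => U (x₀ + x₀ * (inner ℝ w x : ℝ))) :=
  iInf₂_le Q hQ

set_option maxHeartbeats 1000000 in
lemma exists_K_uval_le {d : ℕ} (p k x₀ : ℝ) (hp : 1 ≤ p) (hk : 0 < k) (hx₀ : x₀ ≠ 0)
    (P : Measure (Evec d)) [IsProbabilityMeasure P]
    (hmom : (∫⁻ x, (‖x‖₊ : ℝ≥0∞) ^ p ∂P) < ⊤)
    (U : ℝ → ℝ) (hUc : Continuous U) {M : ℝ} (hM0 : 0 ≤ M) (hM : ∀ x, U x ≤ M)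
    (hUbot : Tendsto U atBot atBot) (c : ℝ) :
    ∃ K : ℝ, 0 < K ∧ ∀ w : Evec d, K ≤ ‖w‖ → uval p k x₀ P U w ≤ (c : EReal) := by
  have hp0 : 0 < p := lt_of_lt_of_le one_pos hp
  rcases le_or_gt M c with hMc | hMc
  · refine ⟨1, one_pos, fun w _ => ?_⟩
    refine ((uval_le_eexp (self_mem_wBall p k hp0 hk.le P hmom)).trans
      (eexp_le_of_le P hM0 (fun x => hM _))).trans ?_
    exact_mod_cast hMc
  -- now c < M
  -- Step 1: find R with P {x | ‖x‖ ≤ R} ≥ 1/2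
  obtain ⟨R, hR1, hPR⟩ : ∃ R : ℝ, 1 ≤ R ∧ ENNReal.ofReal (1/2) ≤ P {x | ‖x‖ ≤ R} := by
    have hmono : Monotone (fun n : ℕ => Metric.closedBall (0 : Evec d) n) := fun m n hmn =>
      Metric.closedBall_subset_closedBall (by exact_mod_cast hmn)
    have hunion : (⋃ n : ℕ, Metric.closedBall (0 : Evec d) n) = Set.univ := by
      ext x
      simp only [Set.mem_iUnion, Metric.mem_closedBall, Set.mem_univ, iff_true]
      obtain ⟨n, hn⟩ := exists_nat_ge (dist x 0)
      exact ⟨n, hn⟩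
    have htend := tendsto_measure_iUnion_atTop (μ := P) hmono
    rw [hunion, measure_univ] at htend
    have hev : ∀ᶠ n : ℕ in atTop, ENNReal.ofReal (1/2) ≤ P (Metric.closedBall 0 n) := by
      refine htend.eventually_const_le ?_
      rw [← ENNReal.ofReal_one]
      exact ENNReal.ofReal_lt_ofReal_iff_of_nonneg (by norm_num) |>.2 (by norm_num)
    obtain ⟨n, hn⟩ := hev.exists
    refine ⟨max n 1, le_max_right _ _, hn.trans (measure_mono ?_)⟩
    intro x hx
    simp only [Metric.mem_closedBall, dist_zero_right] at hx
    simp only [Set.mem_setOf_eq]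
    exact hx.trans (le_max_left _ _)
  have hR0 : (0:ℝ) < R := lt_of_lt_of_le one_pos hR1
  -- Step 2: the mixing weight l and shift size s
  set l : ℝ := min (1/2) ((k/(R+1))^p) with hl_def
  have hl0 : 0 < l := lt_min (by norm_num) (Real.rpow_pos_of_pos (div_pos hk (by linarith)) p)
  have hl1 : l ≤ 1/2 := min_le_left _ _
  have hl2 : l ≤ (k/(R+1))^p := min_le_right _ _
  set s : ℝ := k / l ^ (1/p) with hs_def
  have hlp0 : 0 < l ^ (1/p) := Real.rpow_pos_of_pos hl0 _
  have hs0 : 0 < s := div_pos hk hlp0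
  have hlpk : l ^ (1/p) ≤ k / (R+1) := by
    calc l ^ (1/p) ≤ ((k/(R+1))^p) ^ (1/p) :=
          Real.rpow_le_rpow hl0.le hl2 (by positivity)
    _ = k/(R+1) := by
        rw [← Real.rpow_mul (by positivity), mul_one_div_cancel hp0.ne', Real.rpow_one]
  have hsR : R + 1 ≤ s := by
    rw [hs_def, le_div_iff₀ hlp0]
    calc (R+1) * l ^ (1/p) ≤ (R+1) * (k/(R+1)) := by
          exact mul_le_mul_of_nonneg_left hlpk (by linarith)
    _ = k := by field_simp
  have hlsp : l * s ^ p = k ^ p := by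
    have h1 : (l ^ (1/p)) ^ p = l := by
      rw [← Real.rpow_mul hl0.le, one_div, inv_mul_cancel₀ hp0.ne', Real.rpow_one]
    rw [hs_def, Real.div_rpow hk.le hlp0.le, h1]
    field_simp
  -- Step 3: threshold t and cutoff xt
  set t : ℝ := -(2*(M - c + 1)/l) with ht_def
  have hMc1 : 0 < M - c + 1 := by linarith
  have hlt : l * (-t) / 2 = M - c + 1 := by
    rw [ht_def]; field_simp
  have ht0 : t < 0 := by
    have : 0 < 2*(M - c + 1)/l := by positivity
    rw [ht_def]; linarith
  obtain ⟨xt, hxt⟩ : ∃ xt : ℝ, ∀ y ≤ xt, U y ≤ t := by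
    have := hUbot.eventually (eventually_le_atBot t)
    rwa [eventually_atBot] at this
  -- Step 4: sign
  set σ : ℝ := if 0 < x₀ then (1:ℝ) else -1 with hσ_def
  have hx0 : 0 < |x₀| := abs_pos.2 hx₀
  have hσ : x₀ * σ = |x₀| := by
    rcases lt_or_gt_of_ne hx₀ with h | h
    · simp only [hσ_def, if_neg (not_lt.2 h.le)]
      rw [abs_of_neg h]; ring
    · simp only [hσ_def, if_pos h]
      rw [abs_of_pos h]; ring
  have hσabs : |σ| = 1 := by
    rcases le_or_gt x₀ 0 with h | h
    · rw [hσ_def, if_neg (not_lt.2 h)]; norm_num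
    · rw [hσ_def, if_pos h]; norm_num
  refine ⟨max 1 ((|x₀| - xt)/|x₀| + 1), lt_of_lt_of_le one_pos (le_max_left _ _), fun w hw => ?_⟩
  have hw1 : (1:ℝ) ≤ ‖w‖ := le_trans (le_max_left _ _) hw
  have hwn : (0:ℝ) < ‖w‖ := lt_of_lt_of_le one_pos hw1
  have hw0 : w ≠ 0 := by
    intro h; rw [h, norm_zero] at hwn; exact lt_irrefl _ hwn
  have harg : |x₀| - |x₀| * ‖w‖ ≤ xt := by
    have h1 : (|x₀| - xt)/|x₀| ≤ ‖w‖ := le_trans (by linarith [le_max_right (1:ℝ) ((|x₀| - xt)/|x₀| + 1)]) hw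
    have h2 : |x₀| - xt ≤ ‖w‖ * |x₀| := (div_le_iff₀ hx0).1 h1
    nlinarith
  -- Step 5: the shifted measure
  set v : Evec d := (-(σ * s) / ‖w‖) • w with hv_def
  have hvinner : ∀ x : Evec d, (inner ℝ w (x + v) : ℝ) = (inner ℝ w x : ℝ) - σ * s * ‖w‖ := by
    intro x
    rw [inner_add_right, hv_def, real_inner_smul_right, real_inner_self_eq_norm_mul_norm]
    field_simp; ring
  have hvnorm : ‖v‖ = s := by
    rw [hv_def, norm_smul]
    simp only [Real.norm_eq_abs, abs_div, abs_neg, abs_mul, hσabs, abs_of_pos hs0,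
      abs_of_pos hwn, one_mul]
    field_simp
  set T : Evec d → Evec d := fun x => x + v with hT_def
  have hT : Measurable T := measurable_add_const v
  haveI hPT : IsProbabilityMeasure (P.map T) := Measure.isProbabilityMeasure_map hT.aemeasurable
  set Q : Measure (Evec d) := ENNReal.ofReal (1-l) • P + ENNReal.ofReal l • P.map T with hQ_def
  have hofsum : ENNReal.ofReal (1-l) + ENNReal.ofReal l = 1 := by
    rw [← ENNReal.ofReal_add (by linarith) hl0.le]
    norm_num
  haveI hQprob : IsProbabilityMeasure Q := by
    constructor
    simp only [hQ_def, Measure.add_apply, Measure.smul_apply, smul_eq_mul, measure_univ,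
      mul_one]
    exact hofsum
  -- moment of Q
  have hvfin : ((‖v‖₊ : ℝ≥0∞)) ^ p < ⊤ :=
    ENNReal.rpow_lt_top_of_nonneg hp0.le ENNReal.coe_ne_top
  have hptw : ∀ x : Evec d, ((‖x + v‖₊ : ℝ≥0∞)) ^ p ≤
      2^p * (((‖x‖₊ : ℝ≥0∞)) ^ p + ((‖v‖₊ : ℝ≥0∞)) ^ p) := by
    intro x
    have h1 : ((‖x + v‖₊ : ℝ≥0∞)) ≤ (‖x‖₊ : ℝ≥0∞) + (‖v‖₊ : ℝ≥0∞) := by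
      exact_mod_cast nnnorm_add_le x v
    have h2 : ((‖x + v‖₊ : ℝ≥0∞)) ^ p ≤ ((‖x‖₊ : ℝ≥0∞) + (‖v‖₊ : ℝ≥0∞)) ^ p :=
      ENNReal.rpow_le_rpow h1 hp0.le
    refine h2.trans ?_
    have h3 : (‖x‖₊ : ℝ≥0∞) + (‖v‖₊ : ℝ≥0∞) ≤ 2 * max (‖x‖₊ : ℝ≥0∞) (‖v‖₊ : ℝ≥0∞) := by
      rw [two_mul]
      exact add_le_add (le_max_left _ _) (le_max_right _ _)
    refine (ENNReal.rpow_le_rpow h3 hp0.le).trans ?_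
    rw [ENNReal.mul_rpow_of_nonneg _ _ hp0.le]
    refine mul_le_mul_right ?_ _
    rcases le_total ((‖x‖₊ : ℝ≥0∞)) ((‖v‖₊ : ℝ≥0∞)) with h | h
    · rw [max_eq_right h]; exact le_add_self
    · rw [max_eq_left h]; exact self_le_add_right _ _
  have hnormmeas : Measurable (fun x : Evec d => ((‖x‖₊ : ℝ≥0∞)) ^ p) :=
    (measurable_nnnorm.coe_nnreal_ennreal).pow_const p
  have hmom2 : (∫⁻ x, ((‖x‖₊ : ℝ≥0∞)) ^ p ∂(P.map T)) < ⊤ := by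
    rw [lintegral_map hnormmeas hT]
    calc (∫⁻ x, ((‖x + v‖₊ : ℝ≥0∞)) ^ p ∂P)
        ≤ ∫⁻ x, 2^p * (((‖x‖₊ : ℝ≥0∞)) ^ p + ((‖v‖₊ : ℝ≥0∞)) ^ p) ∂P :=
          lintegral_mono hptw
    _ = 2^p * ((∫⁻ x, ((‖x‖₊ : ℝ≥0∞)) ^ p ∂P) + ((‖v‖₊ : ℝ≥0∞)) ^ p) := by
          rw [lintegral_const_mul' _ _ (by
            exact ENNReal.rpow_ne_top_of_nonneg hp0.le (by norm_num)),
            lintegral_add_right _ measurable_const, lintegral_const, measure_univ, mul_one]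
    _ < ⊤ := by
          refine ENNReal.mul_lt_top ?_ ?_
          · exact ENNReal.rpow_lt_top_of_nonneg hp0.le (by norm_num)
          · exact ENNReal.add_lt_top.2 ⟨hmom, hvfin⟩
  have hQmom : (∫⁻ x, ((‖x‖₊ : ℝ≥0∞)) ^ p ∂Q) < ⊤ := by
    rw [hQ_def, lintegral_add_measure, lintegral_smul_measure, lintegral_smul_measure]
    refine ENNReal.add_lt_top.2 ⟨?_, ?_⟩
    · exact ENNReal.mul_lt_top ENNReal.ofReal_lt_top hmom
    · exact ENNReal.mul_lt_top ENNReal.ofReal_lt_top hmom2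
  -- the coupling
  have hdm : Measurable (fun x : Evec d => (x, x)) := measurable_id.prodMk measurable_id
  have hdm2 : Measurable (fun x : Evec d => (x, x + v)) := measurable_id.prodMk hT
  set π : Measure (Evec d × Evec d) :=
    ENNReal.ofReal (1-l) • P.map (fun x => (x, x)) + ENNReal.ofReal l • P.map (fun x => (x, x + v))
    with hπ_def
  have hπc : π ∈ couplings P Q := by
    refine ⟨?_, ?_, ?_⟩
    · constructor
      haveI i1 : IsProbabilityMeasure (P.map (fun x : Evec d => (x, x))) :=
        Measure.isProbabilityMeasure_map hdm.aemeasurable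
      haveI i2 : IsProbabilityMeasure (P.map (fun x : Evec d => (x, x + v))) :=
        Measure.isProbabilityMeasure_map hdm2.aemeasurable
      simp only [hπ_def, Measure.add_apply, Measure.smul_apply, smul_eq_mul, measure_univ,
        mul_one]
      exact hofsum
    · rw [hπ_def, Measure.map_add _ _ measurable_fst, Measure.map_smul, Measure.map_smul,
        Measure.map_map measurable_fst hdm, Measure.map_map measurable_fst hdm2]
      have e1 : (Prod.fst ∘ fun x : Evec d => (x, x)) = id := rfl
      have e2 : (Prod.fst ∘ fun x : Evec d => (x, x + v)) = id := rfl
      rw [e1, e2, Measure.map_id, ← add_smul, hofsum, one_smul]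
    · rw [hπ_def, Measure.map_add _ _ measurable_snd, Measure.map_smul, Measure.map_smul,
        Measure.map_map measurable_snd hdm, Measure.map_map measurable_snd hdm2]
      have e1 : (Prod.snd ∘ fun x : Evec d => (x, x)) = id := rfl
      have e2 : (Prod.snd ∘ fun x : Evec d => (x, x + v)) = T := rfl
      rw [e1, e2, Measure.map_id]
  have hnm : Measurable (fun z : Evec d × Evec d => ((‖z.1 - z.2‖₊ : ℝ≥0∞)) ^ p) := by
    exact ((measurable_fst.sub measurable_snd).nnnorm.coe_nnreal_ennreal).pow_const p
  have hπint : (∫⁻ z, ((‖z.1 - z.2‖₊ : ℝ≥0∞)) ^ p ∂π) = ENNReal.ofReal (k^p) := by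
    rw [hπ_def, lintegral_add_measure, lintegral_smul_measure, lintegral_smul_measure,
      lintegral_map hnm hdm, lintegral_map hnm hdm2]
    have e1 : (∫⁻ x : Evec d, ((‖x - x‖₊ : ℝ≥0∞)) ^ p ∂P) = 0 := by
      simp [ENNReal.zero_rpow_of_pos hp0]
    have e2 : (∫⁻ x : Evec d, ((‖x - (x + v)‖₊ : ℝ≥0∞)) ^ p ∂P) = ENNReal.ofReal (s ^ p) := by
      have : ∀ x : Evec d, ‖x - (x + v)‖₊ = ‖v‖₊ := by
        intro x
        rw [show x - (x + v) = -v by abel, nnnorm_neg]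
      simp only [this]
      rw [lintegral_const, measure_univ, mul_one, ← enorm_eq_nnnorm, ← ofReal_norm, hvnorm,
        ← ENNReal.ofReal_rpow_of_pos hs0]
    rw [e1, e2, smul_zero, zero_add, smul_eq_mul, ← ENNReal.ofReal_mul hl0.le, hlsp]
  have hW : Wdist p P Q ≤ ENNReal.ofReal k := by
    have hle := iInf₂_le (f := fun ρ _ => (∫⁻ z, ((‖z.1 - z.2‖₊ : ℝ≥0∞)) ^ p ∂ρ) ^ (1/p)) π hπc
    refine le_trans hle ?_
    have hkk : (k ^ p) ^ (1/p) = k := by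
      rw [← Real.rpow_mul hk.le, mul_one_div_cancel hp0.ne', Real.rpow_one]
    rw [hπint, ENNReal.ofReal_rpow_of_pos (by positivity), hkk]
  have hQball : Q ∈ wBall p k P := ⟨hQprob, hQmom, hW⟩
  -- the expectation bound
  set f : Evec d → ℝ := fun x => U (x₀ + x₀ * (inner ℝ w x : ℝ)) with hf_def
  have hfc : Continuous f :=
    hUc.comp (continuous_const.add (continuous_const.mul
      (Continuous.inner continuous_const continuous_id)))
  have hfm : Measurable f := hfc.measurable
  have ha : (∫⁻ x, ENNReal.ofReal (f x) ∂Q) ≤ ENNReal.ofReal M := by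
    calc (∫⁻ x, ENNReal.ofReal (f x) ∂Q) ≤ ∫⁻ _, ENNReal.ofReal M ∂Q :=
          lintegral_mono fun x => ENNReal.ofReal_le_ofReal (hM _)
    _ = ENNReal.ofReal M := by simp
  have hptb : ∀ x : Evec d, ‖x‖ ≤ R → f (x + v) ≤ t := by
    intro x hx
    have hxn : 0 ≤ ‖x‖ := norm_nonneg x
    have hhh : x₀ + x₀ * (inner ℝ w (x + v) : ℝ) ≤ |x₀| - |x₀| * ‖w‖ := by
      rw [hvinner x]
      have h1 : x₀ * (inner ℝ w x : ℝ) ≤ |x₀| * (‖w‖ * R) := by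
        calc x₀ * (inner ℝ w x : ℝ) ≤ |x₀ * (inner ℝ w x : ℝ)| := le_abs_self _
        _ = |x₀| * |(inner ℝ w x : ℝ)| := abs_mul _ _
        _ ≤ |x₀| * (‖w‖ * ‖x‖) := by
              exact mul_le_mul_of_nonneg_left (abs_real_inner_le_norm w x) (abs_nonneg _)
        _ ≤ |x₀| * (‖w‖ * R) := by
              exact mul_le_mul_of_nonneg_left
                (mul_le_mul_of_nonneg_left hx (norm_nonneg w)) (abs_nonneg _)
      have h2 : x₀ * (σ * s * ‖w‖) = |x₀| * (s * ‖w‖) := by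
        rw [← mul_assoc, ← mul_assoc, hσ]; ring
      have h3 : |x₀| * ((R+1) * ‖w‖) ≤ |x₀| * (s * ‖w‖) :=
        mul_le_mul_of_nonneg_left (mul_le_mul_of_nonneg_right hsR hwn.le) (abs_nonneg _)
      have h4 : x₀ ≤ |x₀| := le_abs_self _
      have h5 : |x₀| * ((R+1) * ‖w‖) = |x₀| * (‖w‖ * R) + |x₀| * ‖w‖ := by ring
      have h6 : x₀ * ((inner ℝ w x : ℝ) - σ * s * ‖w‖)
          = x₀ * (inner ℝ w x : ℝ) - x₀ * (σ * s * ‖w‖) := by ring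
      linarith only [h1, h2, h3, h4, h5, h6]
    have := hhh.trans harg
    exact hxt _ this
  have hb : ENNReal.ofReal (M - c + 1) ≤ (∫⁻ x, ENNReal.ofReal (-(f x)) ∂Q) := by
    have hmeas : Measurable (fun x : Evec d => ENNReal.ofReal (-(f x))) :=
      (hfm.neg).ennreal_ofReal
    have step1 : ENNReal.ofReal (-t) * ENNReal.ofReal (1/2)
        ≤ (∫⁻ x, ENNReal.ofReal (-(f (x + v))) ∂P) := by
      calc ENNReal.ofReal (-t) * ENNReal.ofReal (1/2)
          ≤ ENNReal.ofReal (-t) * P {x : Evec d | ‖x‖ ≤ R} :=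
            mul_le_mul_right hPR _
      _ = ∫⁻ _ in {x : Evec d | ‖x‖ ≤ R}, ENNReal.ofReal (-t) ∂P := by
            rw [setLIntegral_const]
      _ ≤ ∫⁻ x in {x : Evec d | ‖x‖ ≤ R}, ENNReal.ofReal (-(f (x + v))) ∂P := by
            refine setLIntegral_mono (((hfm.comp hT).neg).ennreal_ofReal) ?_
            intro x hx
            exact ENNReal.ofReal_le_ofReal (by linarith [hptb x hx])
      _ ≤ ∫⁻ x, ENNReal.ofReal (-(f (x + v))) ∂P := setLIntegral_le_lintegral _ _
    have step2 : (∫⁻ x, ENNReal.ofReal (-(f x)) ∂(P.map T))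
        = ∫⁻ x, ENNReal.ofReal (-(f (x + v))) ∂P := lintegral_map hmeas hT
    calc ENNReal.ofReal (M - c + 1) = ENNReal.ofReal (l * ((-t) * (1/2))) := by
          rw [← hlt]; ring_nf
    _ = ENNReal.ofReal l * (ENNReal.ofReal (-t) * ENNReal.ofReal (1/2)) := by
          rw [ENNReal.ofReal_mul hl0.le, ENNReal.ofReal_mul (by linarith)]
    _ ≤ ENNReal.ofReal l * (∫⁻ x, ENNReal.ofReal (-(f x)) ∂(P.map T)) := by
          rw [step2]; exact mul_le_mul_right step1 _
    _ ≤ (∫⁻ x, ENNReal.ofReal (-(f x)) ∂Q) := by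
          rw [hQ_def, lintegral_add_measure, lintegral_smul_measure, lintegral_smul_measure]
          exact le_add_self
  refine le_trans (uval_le_eexp hQball) ?_
  have hfinal : eexp Q f ≤ ((ENNReal.ofReal M : ℝ≥0∞) : EReal)
      - ((ENNReal.ofReal (M - c + 1) : ℝ≥0∞) : EReal) :=
    EReal.sub_le_sub (EReal.coe_ennreal_le_coe_ennreal_iff.2 ha)
      (EReal.coe_ennreal_le_coe_ennreal_iff.2 hb)
  refine hfinal.trans ?_
  rw [EReal.coe_ennreal_ofReal, EReal.coe_ennreal_ofReal, max_eq_left hM0,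
    max_eq_left (by linarith : (0:ℝ) ≤ M - c + 1), ← EReal.coe_sub]
  exact EReal.coe_le_coe_iff.2 (by linarith)


set_option maxHeartbeats 1000000 in
lemma limsup_eexp_le {d : ℕ} (x₀ : ℝ) (Q : Measure (Evec d)) [IsProbabilityMeasure Q]
    (U : ℝ → ℝ) (hUc : Continuous U) {M : ℝ} (hM0 : 0 ≤ M) (hM : ∀ x, U x ≤ M)
    (w : ℕ → Evec d) (wl : Evec d) (hw : Tendsto w atTop (𝓝 wl)) :
    limsup (fun n => eexp Q (fun x => U (x₀ + x₀ * (inner ℝ (w n) x : ℝ)))) atTop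
      ≤ eexp Q (fun x => U (x₀ + x₀ * (inner ℝ wl x : ℝ))) := by
  set F : Evec d → Evec d → ℝ := fun u x => U (x₀ + x₀ * (inner ℝ u x : ℝ)) with hF_def
  have hcont : ∀ x : Evec d, Continuous fun u => F u x := fun x =>
    hUc.comp (continuous_const.add (continuous_const.mul
      (Continuous.inner continuous_id continuous_const)))
  have hcontx : ∀ u : Evec d, Continuous fun x => F u x := fun u =>
    hUc.comp (continuous_const.add (continuous_const.mul
      (Continuous.inner continuous_const continuous_id)))
  have hptF : ∀ x : Evec d, Tendsto (fun n => F (w n) x) atTop (𝓝 (F wl x)) := fun x =>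
    ((hcont x).tendsto wl).comp hw
  set an : ℕ → ℝ≥0∞ := fun n => ∫⁻ x, ENNReal.ofReal (F (w n) x) ∂Q with han_def
  set bn : ℕ → ℝ≥0∞ := fun n => ∫⁻ x, ENNReal.ofReal (-(F (w n) x)) ∂Q with hbn_def
  set a : ℝ≥0∞ := ∫⁻ x, ENNReal.ofReal (F wl x) ∂Q with ha_def
  set b : ℝ≥0∞ := ∫⁻ x, ENNReal.ofReal (-(F wl x)) ∂Q with hb_def
  have ha_tendsto : Tendsto an atTop (𝓝 a) := by
    refine tendsto_lintegral_of_dominated_convergence (fun _ => ENNReal.ofReal M)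
      (fun n => ((hcontx (w n)).measurable).ennreal_ofReal) ?_ ?_ ?_
    · intro n
      exact Eventually.of_forall fun x => ENNReal.ofReal_le_ofReal (hM _)
    · simp [measure_univ]
    · exact Eventually.of_forall fun x =>
        (ENNReal.continuous_ofReal.tendsto _).comp (hptF x)
  have hb_le : ((b : ℝ≥0∞) : EReal) ≤ liminf (fun n => ((bn n : ℝ≥0∞) : EReal)) atTop := by
    have h1 : b ≤ liminf bn atTop := by
      have heq : (fun x : Evec d => ENNReal.ofReal (-(F wl x)))
          = fun x => liminf (fun n => ENNReal.ofReal (-(F (w n) x))) atTop := by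
        funext x
        exact (((ENNReal.continuous_ofReal.tendsto _).comp ((hptF x).neg)).liminf_eq).symm
      rw [hb_def, heq]
      exact lintegral_liminf_le fun n => ((hcontx (w n)).measurable.neg).ennreal_ofReal
    have h2 : ((liminf bn atTop : ℝ≥0∞) : EReal) = liminf (fun n => ((bn n : ℝ≥0∞) : EReal)) atTop := by
      exact Monotone.map_liminf_of_continuousAt
        (f := fun x : ℝ≥0∞ => (x : EReal))
        (fun x y h => EReal.coe_ennreal_le_coe_ennreal_iff.2 h) bn
        continuous_coe_ennreal_ereal.continuousAt
    calc ((b : ℝ≥0∞) : EReal) ≤ ((liminf bn atTop : ℝ≥0∞) : EReal) :=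
          EReal.coe_ennreal_le_coe_ennreal_iff.2 h1
    _ = _ := h2
  have ha_le : a ≤ ENNReal.ofReal M := by
    rw [ha_def]
    calc (∫⁻ x, ENNReal.ofReal (F wl x) ∂Q) ≤ ∫⁻ _, ENNReal.ofReal M ∂Q :=
          lintegral_mono fun x => ENNReal.ofReal_le_ofReal (hM _)
    _ = ENNReal.ofReal M := by simp
  have hA_tendsto : Tendsto (fun n => ((an n : ℝ≥0∞) : EReal)) atTop (𝓝 ((a : ℝ≥0∞) : EReal)) :=
    (continuous_coe_ennreal_ereal.tendsto a).comp ha_tendsto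
  have hlimsupA : limsup (fun n => ((an n : ℝ≥0∞) : EReal)) atTop = ((a : ℝ≥0∞) : EReal) :=
    hA_tendsto.limsup_eq
  have hAne_top : ((a : ℝ≥0∞) : EReal) ≠ ⊤ := by
    intro h
    rw [EReal.coe_ennreal_eq_top_iff] at h
    exact (lt_of_le_of_lt ha_le ENNReal.ofReal_lt_top).ne h
  have key : limsup (fun n => ((an n : ℝ≥0∞) : EReal) + (-((bn n : ℝ≥0∞) : EReal))) atTop
      ≤ ((a : ℝ≥0∞) : EReal) + (- ((b : ℝ≥0∞) : EReal)) := by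
    refine le_trans (EReal.limsup_add_le ?_ ?_) ?_
    · left; rw [hlimsupA]; exact EReal.coe_ennreal_ne_bot a
    · left; rw [hlimsupA]; exact hAne_top
    · rw [hlimsupA,
        show (fun n => -((bn n : ℝ≥0∞) : EReal)) = -(fun n => ((bn n : ℝ≥0∞) : EReal)) from rfl,
        EReal.limsup_neg]
      exact add_le_add_right (EReal.neg_le_neg_iff.2 hb_le) _
  have heexp : ∀ n, eexp Q (fun x => U (x₀ + x₀ * (inner ℝ (w n) x : ℝ)))
      = ((an n : ℝ≥0∞) : EReal) + (-((bn n : ℝ≥0∞) : EReal)) := by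
    intro n
    rw [eexp, sub_eq_add_neg]
  have heexp2 : eexp Q (fun x => U (x₀ + x₀ * (inner ℝ wl x : ℝ)))
      = ((a : ℝ≥0∞) : EReal) + (-((b : ℝ≥0∞) : EReal)) := by
    rw [eexp, sub_eq_add_neg]
  rw [heexp2]
  simp only [heexp]
  exact key

lemma limsup_uval_le {d : ℕ} (p k x₀ : ℝ) (P : Measure (Evec d)) [IsProbabilityMeasure P]
    (U : ℝ → ℝ) (hUc : Continuous U) {M : ℝ} (hM0 : 0 ≤ M) (hM : ∀ x, U x ≤ M)
    (w : ℕ → Evec d) (wl : Evec d) (hw : Tendsto w atTop (𝓝 wl)) :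
    limsup (fun n => uval p k x₀ P U (w n)) atTop ≤ uval p k x₀ P U wl := by
  rw [uval]
  refine le_iInf₂ fun Q hQ => ?_
  haveI := hQ.1
  refine le_trans (limsup_le_limsup (Eventually.of_forall fun n => uval_le_eexp hQ)) ?_
  exact limsup_eexp_le x₀ Q U hUc hM0 hM w wl hw

set_option maxHeartbeats 1000000

/-- when `U` is bounded from above (with `U(x) → −∞` as `x → −∞`), the robust
value restricts to bounded weights and is attained at some `w_k ∈ D` with `|w_k| ≤ K`. -/
theorem exists_bounded_maximizer_bddAbove {d : ℕ} (p k x₀ : ℝ) (hp : 1 ≤ p) (hk : 0 < k)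
    (hx₀ : x₀ ≠ 0) (P : Measure (Evec d)) [IsProbabilityMeasure P]
    (hmom : (∫⁻ x, (‖x‖₊ : ℝ≥0∞) ^ p ∂P) < ⊤)
    (D : Set (Evec d)) (hD : D.Nonempty) (hDc : IsClosed D)
    (U : ℝ → ℝ) (hU : Monotone U) (hUc : Continuous U)
    (hbdd : BddAbove (Set.range U)) (hUbot : Tendsto U atBot atBot)
    (wstar : Evec d) (hws : wstar ∈ D)
    (hfin : ⊥ < uval p k x₀ P U wstar) :
    ∃ K : ℝ, 0 < K ∧ ‖wstar‖ ≤ K ∧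
      ((⨆ w ∈ D, uval p k x₀ P U w) = ⨆ w ∈ {v ∈ D | ‖v‖ ≤ K}, uval p k x₀ P U w) ∧
      ∃ wk ∈ D, ‖wk‖ ≤ K ∧ uval p k x₀ P U wk = ⨆ w ∈ D, uval p k x₀ P U w := by
  obtain ⟨M₀, hM₀⟩ := hbdd
  set M : ℝ := max M₀ 0 with hM_def
  have hM0 : (0:ℝ) ≤ M := le_max_right _ _
  have hM : ∀ x, U x ≤ M := fun x => le_trans (hM₀ ⟨x, rfl⟩) (le_max_left _ _)
  have hp0 : 0 < p := lt_of_lt_of_le one_pos hp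
  obtain ⟨c, _, hc2⟩ := EReal.exists_between_coe_real hfin
  obtain ⟨K₀, hK₀pos, hK₀⟩ := exists_K_uval_le p k x₀ hp hk hx₀ P hmom U hUc hM0 hM hUbot c
  set K : ℝ := max K₀ (‖wstar‖ + 1) with hK_def
  have hKpos : 0 < K :=
    lt_of_lt_of_le (by positivity) (le_max_right _ _)
  have hwsK : ‖wstar‖ ≤ K := le_trans (by linarith) (le_max_right _ _)
  set S : Set (Evec d) := {v ∈ D | ‖v‖ ≤ K} with hS_def
  have hwsS : wstar ∈ S := ⟨hws, hwsK⟩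
  have hsmall : ∀ w ∈ D, ¬(‖w‖ ≤ K) → uval p k x₀ P U w ≤ uval p k x₀ P U wstar := by
    intro w _ hwK
    have h1 : K₀ ≤ ‖w‖ := le_trans (le_max_left _ _) (le_of_not_ge hwK)
    exact (hK₀ w h1).trans hc2.le
  have hsup_eq : (⨆ w ∈ D, uval p k x₀ P U w) = ⨆ w ∈ S, uval p k x₀ P U w := by
    apply le_antisymm
    · refine iSup₂_le fun w hwD => ?_
      by_cases hwK : ‖w‖ ≤ K
      · exact le_iSup₂ (f := fun w _ => uval p k x₀ P U w) w ⟨hwD, hwK⟩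
      · exact (hsmall w hwD hwK).trans
          (le_iSup₂ (f := fun w _ => uval p k x₀ P U w) wstar hwsS)
    · exact iSup₂_le fun w hw => le_iSup₂ (f := fun w _ => uval p k x₀ P U w) w hw.1
  -- compactness of S
  have hSc : IsCompact S := by
    have hSeq : S = D ∩ Metric.closedBall 0 K := by
      ext x
      simp only [hS_def, Set.mem_setOf_eq, Set.mem_inter_iff, Metric.mem_closedBall,
        dist_zero_right]
    rw [hSeq]
    exact IsCompact.of_isClosed_subset (isCompact_closedBall 0 K)
      (hDc.inter Metric.isClosed_closedBall) Set.inter_subset_right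
  -- the maximizer
  set A : Set EReal := (fun w => uval p k x₀ P U w) '' S with hA_def
  have hA_ne : A.Nonempty := ⟨_, ⟨wstar, hwsS, rfl⟩⟩
  obtain ⟨y, _, hy_tendsto, hy_mem⟩ := exists_seq_tendsto_sSup hA_ne (OrderTop.bddAbove A)
  choose wseq hwseq hval using hy_mem
  obtain ⟨wk, hwkS, φ, hφ, hconv⟩ := hSc.tendsto_subseq hwseq
  have hsub : Tendsto (fun n => y (φ n)) atTop (𝓝 (sSup A)) :=
    hy_tendsto.comp hφ.tendsto_atTop
  have husc := limsup_uval_le p k x₀ P U hUc hM0 hM (fun n => wseq (φ n)) wk hconv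
  have hge : sSup A ≤ uval p k x₀ P U wk := by
    have heq : (fun n => uval p k x₀ P U (wseq (φ n))) = fun n => y (φ n) :=
      funext fun n => hval (φ n)
    have : limsup (fun n => uval p k x₀ P U (wseq (φ n))) atTop = sSup A := by
      rw [heq]; exact hsub.limsup_eq
    rw [← this]; exact husc
  have hSsup : sSup A = ⨆ w ∈ S, uval p k x₀ P U w := by
    rw [hA_def, sSup_image]
  refine ⟨K, hKpos, hwsK, hsup_eq, wk, hwkS.1, hwkS.2, ?_⟩
  apply le_antisymm
  · exact le_iSup₂ (f := fun w _ => uval p k x₀ P U w) wk hwkS.1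
  · rw [hsup_eq, ← hSsup]; exact hge
end
end

section
/- Let p ≥ 1, let P be a Borel probability measure on ℝ^d with finite p-th moment, let k > 0, let x₀ ≠ 0 be a real number, let w ∈ ℝ^d with w ≠ 0, and let U : ℝ → ℝ be non-decreasing and Borel measurable. Fix an atomless Polish probability space (Ω, F, μ) and let B_k^μ denote the set of measurable Z : Ω → ℝ^d with (E_μ[|Z|^p])^{1/p} ≤ k. Then: (a) for every ε > 0 there exists an ε-optimizer (X^ε, Z^ε) of inf_{X^μ ~ P, Z^μ ∈ B_k^μ} E_μ[U(x₀ + x₀⟨w, X^μ + Z^μ⟩)] satisfying Z^ε = −sign(x₀)|Z^ε| w/|w|; (b) consequently, inf_{X^μ ~ P, Z^μ ∈ B_k^μ} E_μ[U(x₀ + x₀⟨w, X^μ + Z^μ⟩)] = inf_{X^μ ~ P, Z^μ ∈ B_k^μ} E_μ[U(x₀ + x₀⟨w, X^μ⟩ − |x₀||Z^μ||w|)]. -/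
open MeasureTheory Filter
open scoped ENNReal

noncomputable section

section AuxLemmas
open Set ProbabilityTheory
open scoped Topology

lemma quantile_exists (ν : Measure ℝ) [IsProbabilityMeasure ν] :
    ∃ T : ℝ → ℝ, Measurable T ∧ (volume.restrict (Set.Ioo 0 1)).map T = ν := by
  set F : StieltjesFunction ℝ := cdf ν with hF
  set T0 : ℝ → ℝ := fun t => sInf {x | t ≤ F x} with hT0
  have galois : ∀ t ∈ Ioo (0:ℝ) 1, ∀ y : ℝ, (T0 t ≤ y ↔ t ≤ F y) := by
    intro t ht y
    obtain ⟨ht0, ht1⟩ := ht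
    obtain ⟨z, hz⟩ : ∃ z, F z < t := by
      have := tendsto_cdf_atBot ν
      have h := this.eventually_lt_const ht0
      exact h.exists
    have hbdd : BddBelow {x | t ≤ F x} := by
      refine ⟨z, fun x hx => ?_⟩
      by_contra hzx
      push_neg at hzx
      exact absurd (le_trans hx ((monotone_cdf ν) hzx.le)) (not_le.mpr hz)
    obtain ⟨z', hz'⟩ : ∃ z', t ≤ F z' := by
      have := tendsto_cdf_atTop ν
      have h := this.eventually_const_lt ht1
      exact h.exists.imp fun z hz => hz.le
    have hne : {x | t ≤ F x}.Nonempty := ⟨z', hz'⟩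
    constructor
    · intro hty
      have key : ∀ y' > y, t ≤ F y' := by
        intro y' hy'
        obtain ⟨x, hx, hxy⟩ := exists_lt_of_csInf_lt hne (lt_of_le_of_lt hty hy')
        exact le_trans hx ((monotone_cdf ν) hxy.le)
      have hrc : Tendsto F (𝓝[>] y) (𝓝 (F y)) := by
        have := F.right_continuous y
        rw [← continuousWithinAt_Ioi_iff_Ici] at this
        exact this
      exact ge_of_tendsto hrc (eventually_nhdsWithin_of_forall fun x hx => key x hx)
    · intro h
      exact csInf_le hbdd h
  classical
  set T : ℝ → ℝ := fun t => if t ∈ Ioo (0:ℝ) 1 then T0 t else 0 with hT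
  have preim : ∀ y : ℝ, T ⁻¹' Iic y =
      (Ioo (0:ℝ) 1 ∩ Iic (F y)) ∪ ((Ioo (0:ℝ) 1)ᶜ ∩ (if 0 ≤ y then univ else ∅)) := by
    intro y
    ext t
    by_cases ht : t ∈ Ioo (0:ℝ) 1
    · simp only [mem_preimage, mem_Iic, hT, if_pos ht, mem_union, mem_inter_iff, ht,
        mem_compl_iff, not_true, false_and, or_false, true_and]
      exact galois t ht y
    · simp only [mem_preimage, mem_Iic, hT, if_neg ht, mem_union, mem_inter_iff, ht,
        mem_compl_iff, not_false_iff, true_and, false_and, false_or]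
      by_cases hy : 0 ≤ y <;> simp [hy]
  have hTmeas : Measurable T := by
    apply measurable_of_Iic
    intro y
    rw [preim y]
    exact ((measurableSet_Ioo.inter measurableSet_Iic).union
      (measurableSet_Ioo.compl.inter (by split <;> simp)))
  refine ⟨T, hTmeas, ?_⟩
  have hprob : IsProbabilityMeasure (volume.restrict (Set.Ioo (0:ℝ) 1)) := by
    constructor
    simp [Real.volume_Ioo]
  have : IsProbabilityMeasure ((volume.restrict (Set.Ioo (0:ℝ) 1)).map T) :=
    Measure.isProbabilityMeasure_map hTmeas.aemeasurable
  refine Measure.ext_of_Iic _ _ (fun y => ?_)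
  rw [Measure.map_apply hTmeas measurableSet_Iic, preim y]
  have h01 : (0:ℝ) ≤ F y ∧ F y ≤ 1 := ⟨cdf_nonneg ν y, cdf_le_one ν y⟩
  rw [Measure.restrict_apply ((measurableSet_Ioo.inter measurableSet_Iic).union
      (measurableSet_Ioo.compl.inter (by split <;> simp)))]
  have hset : ((Ioo (0:ℝ) 1 ∩ Iic (F y)) ∪ ((Ioo (0:ℝ) 1)ᶜ ∩ (if 0 ≤ y then univ else ∅))) ∩
      Ioo (0:ℝ) 1 = Ioo (0:ℝ) 1 ∩ Iic (F y) := by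
    ext t
    constructor
    · rintro ⟨(h | h), ht⟩
      · exact h
      · exact absurd ht h.1
    · intro h
      exact ⟨Or.inl h, h.1⟩
  rw [hset, ← ofReal_cdf ν y]
  rcases lt_or_eq_of_le h01.2 with hc | hc
  · have : Ioo (0:ℝ) 1 ∩ Iic (F y) = Ioc 0 (F y) := by
      ext t
      simp only [mem_inter_iff, mem_Ioo, mem_Iic, mem_Ioc]
      constructor
      · rintro ⟨⟨h1, h2⟩, h3⟩; exact ⟨h1, h3⟩
      · rintro ⟨h1, h3⟩; exact ⟨⟨h1, lt_of_le_of_lt h3 hc⟩, h3⟩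
    rw [this, Real.volume_Ioc, sub_zero]
  · have : Ioo (0:ℝ) 1 ∩ Iic (F y) = Ioo 0 1 := by
      rw [← hc]
      refine inter_eq_left.mpr (fun t ht => le_of_lt ht.2)
    rw [this, Real.volume_Ioo, ← hc]
    norm_num
    rfl

lemma uniform_exists {Ω : Type} [MeasurableSpace Ω] [TopologicalSpace Ω] [PolishSpace Ω]
    [BorelSpace Ω] (μ : Measure Ω) [IsProbabilityMeasure μ] [NullSingletonClass μ] :
    ∃ V : Ω → ℝ, Measurable V ∧ μ.map V = volume.restrict (Set.Ioo 0 1) := by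
  obtain ⟨e, he⟩ := MeasureTheory.exists_measurableEmbedding_real Ω
  set ν : Measure ℝ := μ.map e with hν
  haveI : IsProbabilityMeasure ν := Measure.isProbabilityMeasure_map he.measurable.aemeasurable
  haveI : NullSingletonClass ν := by
    constructor
    intro x
    rw [hν, Measure.map_apply he.measurable (measurableSet_singleton x)]
    exact Set.Subsingleton.measure_zero
      (fun a ha b hb => he.injective (ha.trans hb.symm)) μ
  set F : ℝ → ℝ := fun x => cdf ν x with hFdef
  have hFmono : Monotone F := monotone_cdf ν
  have hFmeas : Measurable F := hFmono.measurable
  refine ⟨F ∘ e, hFmeas.comp he.measurable, ?_⟩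
  rw [← Measure.map_map hFmeas he.measurable, ← hν]
  haveI : IsProbabilityMeasure (ν.map F) := Measure.isProbabilityMeasure_map hFmeas.aemeasurable
  refine Measure.ext_of_Iic _ _ (fun t => ?_)
  rw [Measure.map_apply hFmeas measurableSet_Iic,
    Measure.restrict_apply measurableSet_Iic]
  have hA : F ⁻¹' Iic t = {x | F x ≤ t} := rfl
  rcases lt_or_ge t 0 with ht0 | ht0
  · have h1 : F ⁻¹' Iic t = ∅ := by
      ext x; simp only [mem_preimage, mem_Iic, mem_empty_iff_false, iff_false, not_le]
      exact lt_of_lt_of_le ht0 (cdf_nonneg ν x)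
    have h2 : Iic t ∩ Ioo (0:ℝ) 1 = ∅ := by
      ext x; simp only [mem_inter_iff, mem_Iic, mem_Ioo, mem_empty_iff_false, iff_false]
      rintro ⟨hx1, hx2, _⟩; exact absurd (lt_of_le_of_lt hx1 ht0) (not_lt.mpr hx2.le)
    rw [h1, h2]
    simp
  rcases le_or_gt 1 t with ht1 | ht1
  · have h1 : F ⁻¹' Iic t = univ := by
      ext x; simp only [mem_preimage, mem_Iic, mem_univ, iff_true]
      exact le_trans (cdf_le_one ν x) ht1
    have h2 : Iic t ∩ Ioo (0:ℝ) 1 = Ioo 0 1 := by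
      refine inter_eq_right.mpr (fun x hx => le_trans hx.2.le ht1)
    rw [h1, h2, measure_univ, Real.volume_Ioo]
    norm_num
  · have h2 : Iic t ∩ Ioo (0:ℝ) 1 = Ioc 0 t := by
      ext x
      simp only [mem_inter_iff, mem_Iic, mem_Ioo, mem_Ioc]
      constructor
      · rintro ⟨h1, h2, _⟩; exact ⟨h2, h1⟩
      · rintro ⟨h1, h3⟩; exact ⟨h3, h1, lt_of_le_of_lt h3 ht1⟩
    rw [h2, Real.volume_Ioc, sub_zero]
    set A : Set ℝ := {x | F x ≤ t} with hAdef
    rcases eq_empty_or_nonempty A with hAe | hAne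
    · have ht0' : t ≤ 0 := by
        by_contra h
        push_neg at h
        obtain ⟨z, hz⟩ := ((tendsto_cdf_atBot ν).eventually_lt_const h).exists
        have hzA : z ∈ A := le_of_lt hz
        rw [hAe] at hzA
        exact hzA
      have ht00 : t = 0 := le_antisymm ht0' ht0
      rw [hA, hAe, ht00]
      simp
    · have hbdd : BddAbove A := by
        obtain ⟨z, hz⟩ := ((tendsto_cdf_atTop ν).eventually_const_lt ht1).exists
        refine ⟨z, fun x hx => ?_⟩
        by_contra hzx
        push_neg at hzx
        exact absurd hx (not_le.mpr (lt_of_lt_of_le hz (hFmono hzx.le)))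
      set a : ℝ := sSup A with ha
      have hIio : Iio a ⊆ A := by
        intro x hx
        obtain ⟨x', hx', hxx'⟩ := exists_lt_of_lt_csSup hAne hx
        exact le_trans (hFmono hxx'.le) hx'
      have hIic : A ⊆ Iic a := fun x hx => le_csSup hbdd hx
      have hFa_ge : t ≤ F a := by
        have hrc : Tendsto F (𝓝[>] a) (𝓝 (F a)) := by
          have := (cdf ν).right_continuous a
          rw [← continuousWithinAt_Ioi_iff_Ici] at this
          exact this
        refine ge_of_tendsto hrc (eventually_nhdsWithin_of_forall fun y hy => ?_)
        by_contra h
        push_neg at h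
        exact absurd (hIic h.le) (not_le.mpr (show a < y from hy))
      have hleft : Function.leftLim F a ≤ t := by
        have hlt : Tendsto F (𝓝[<] a) (𝓝 (Function.leftLim F a)) := hFmono.tendsto_leftLim a
        refine le_of_tendsto hlt (eventually_nhdsWithin_of_forall fun y hy => hIio hy)
      have hnoatom : F a = Function.leftLim F a := by
        have h1 : (cdf ν).measure {a} = ν {a} := by rw [measure_cdf]
        have h2 : ν {a} = 0 := measure_singleton a
        rw [StieltjesFunction.measure_singleton] at h1
        have h3 : F a - Function.leftLim F a ≤ 0 := by
          by_contra h
          push_neg at h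
          rw [h2] at h1
          rw [ENNReal.ofReal_eq_zero] at h1
          exact absurd h1 (not_le.mpr (show (0:ℝ) < cdf ν a - Function.leftLim (⇑(cdf ν)) a from h))
        have h4 : Function.leftLim F a ≤ F a := hFmono.leftLim_le le_rfl
        linarith
      have hFa : F a = t := le_antisymm (hnoatom ▸ hleft) hFa_ge
      have hup : ν A ≤ ENNReal.ofReal t := by
        calc ν A ≤ ν (Iic a) := measure_mono hIic
        _ = ENNReal.ofReal (F a) := (ofReal_cdf ν a).symm
        _ = ENNReal.ofReal t := by rw [hFa]
      have hdown : ENNReal.ofReal t ≤ ν A := by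
        calc ENNReal.ofReal t = ENNReal.ofReal (F a) := by rw [hFa]
        _ = ν (Iic a) := ofReal_cdf ν a
        _ ≤ ν (Iio a) + ν {a} := by
            rw [← Iio_union_right]; exact measure_union_le _ _
        _ = ν (Iio a) := by rw [measure_singleton a, add_zero]
        _ ≤ ν A := measure_mono hIio
      exact le_antisymm hup hdown

lemma pushforward_exists {α : Type*} [MeasurableSpace α] [StandardBorelSpace α] [Nonempty α]
    (Q : Measure α) [IsProbabilityMeasure Q]
    {Ω : Type} [MeasurableSpace Ω] [TopologicalSpace Ω] [PolishSpace Ω]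
    [BorelSpace Ω] (μ : Measure Ω) [IsProbabilityMeasure μ] [NullSingletonClass μ] :
    ∃ f : Ω → α, Measurable f ∧ μ.map f = Q := by
  obtain ⟨V, hVmeas, hVmap⟩ := uniform_exists μ
  obtain ⟨e, he⟩ := MeasureTheory.exists_measurableEmbedding_real α
  haveI : IsProbabilityMeasure (Q.map e) := Measure.isProbabilityMeasure_map he.measurable.aemeasurable
  obtain ⟨T, hTmeas, hTmap⟩ := quantile_exists (Q.map e)
  set g : ℝ → α := Function.extend e id (fun _ => Classical.arbitrary α) with hg
  have hgmeas : Measurable g := he.measurable_extend measurable_id measurable_const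
  have hge : ∀ x, g (e x) = x := fun x => he.injective.extend_apply _ _ x
  refine ⟨g ∘ T ∘ V, hgmeas.comp (hTmeas.comp hVmeas), ?_⟩
  have : μ.map (g ∘ T ∘ V) = ((μ.map V).map T).map g := by
    rw [Measure.map_map hTmeas hVmeas, Measure.map_map hgmeas (hTmeas.comp hVmeas)]
  rw [this, hVmap, hTmap, Measure.map_map hgmeas he.measurable]
  have h2 : g ∘ e = id := funext hge
  rw [h2, Measure.map_id]

lemma eexp_mono {α : Type*} [MeasurableSpace α] (Q : Measure α) {f g : α → ℝ}
    (h : ∀ x, f x ≤ g x) : eexp Q f ≤ eexp Q g := by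
  apply EReal.sub_le_sub
  · exact EReal.coe_ennreal_le_coe_ennreal_iff.mpr
      (lintegral_mono fun x => ENNReal.ofReal_le_ofReal (h x))
  · exact EReal.coe_ennreal_le_coe_ennreal_iff.mpr
      (lintegral_mono fun x => ENNReal.ofReal_le_ofReal (neg_le_neg (h x)))

lemma eexp_bot {α : Type*} [MeasurableSpace α] (Q : Measure α) (f : α → ℝ)
    (h : (∫⁻ x, ENNReal.ofReal (-(f x)) ∂Q) = ⊤) : eexp Q f = ⊥ := by
  rw [eexp, h, EReal.coe_ennreal_top, EReal.sub_top]

lemma ennreal_coe_toReal_ereal {b : ℝ≥0∞} (hb : b ≠ ⊤) :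
    (b : EReal) = ((b.toReal : ℝ) : EReal) := by
  conv_lhs => rw [← ENNReal.ofReal_toReal hb]
  rw [EReal.coe_ennreal_ofReal, max_eq_left ENNReal.toReal_nonneg]

lemma neg_part_large_of_eexp_lt {α : Type*} [MeasurableSpace α] {Q : Measure α} {f : α → ℝ}
    {c : ℝ} (h : eexp Q f < ((-c : ℝ) : EReal)) :
    ENNReal.ofReal c ≤ ∫⁻ x, ENNReal.ofReal (-(f x)) ∂Q := by
  simp only [eexp] at h
  set a := ∫⁻ x, ENNReal.ofReal (f x) ∂Q with haa
  set b := ∫⁻ x, ENNReal.ofReal (-(f x)) ∂Q with hbb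
  by_cases hb : b = ⊤
  · rw [hb]; exact le_top
  have hbe : (b : EReal) = ((b.toReal : ℝ) : EReal) := ennreal_coe_toReal_ereal hb
  by_cases ha : a = ⊤
  · exfalso
    rw [ha, EReal.coe_ennreal_top, hbe, EReal.top_sub_coe] at h
    exact absurd h not_top_lt
  have hae : (a : EReal) = ((a.toReal : ℝ) : EReal) := ennreal_coe_toReal_ereal ha
  rw [hae, hbe, ← EReal.coe_sub, EReal.coe_lt_coe_iff] at h
  have h2 : c ≤ b.toReal := by
    have h3 : (0:ℝ) ≤ a.toReal := ENNReal.toReal_nonneg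
    linarith
  calc ENNReal.ofReal c ≤ ENNReal.ofReal b.toReal := ENNReal.ofReal_le_ofReal h2
  _ = b := ENNReal.ofReal_toReal hb

lemma rpow_one_div_le_iff {p : ℝ} (hp : 0 < p) {x K : ℝ≥0∞} : x ^ (1/p) ≤ K ↔ x ≤ K ^ p := by
  rw [← ENNReal.rpow_le_rpow_iff hp (x := x ^ (1/p)), ← ENNReal.rpow_mul,
    one_div_mul_cancel hp.ne', ENNReal.rpow_one]

lemma ennreal_eq_top_of_pow_le {x : ℝ≥0∞} (h : ∀ n : ℕ, (2:ℝ≥0∞)^n ≤ x) : x = ⊤ := by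
  by_contra hx
  obtain ⟨n, hn⟩ := ENNReal.exists_nat_gt hx
  have h2 : ((n:ℝ≥0∞)) ≤ 2^n := by
    calc ((n:ℝ≥0∞)) ≤ ((2^n : ℕ) : ℝ≥0∞) := Nat.cast_le.mpr Nat.lt_two_pow_self.le
    _ = 2^n := by push_cast; ring
  exact absurd (lt_of_lt_of_le hn (h2.trans (h n))) (lt_irrefl x)

lemma pow_weight_eq (n : ℕ) : ((2:ℝ≥0∞)⁻¹)^(n+1) * 2^(2*n+1) = 2^n := by
  have h : (2:ℝ≥0∞)^(2*n+1) = 2^(n+1) * 2^n := by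
    rw [← pow_add]
    congr 1
    ring
  rw [← ENNReal.inv_pow, h, ← mul_assoc,
    ENNReal.inv_mul_cancel (pow_ne_zero _ two_ne_zero) (ENNReal.pow_ne_top ENNReal.ofNat_ne_top),
    one_mul]

lemma geom_half_sum : ∑' (n:ℕ), ((2:ℝ≥0∞)⁻¹)^(n+1) = 1 := by
  simp only [pow_succ, ENNReal.tsum_mul_right, ENNReal.tsum_geometric]
  rw [ENNReal.one_sub_inv_two, inv_inv]
  rw [mul_comm]
  exact ENNReal.inv_mul_cancel two_ne_zero ENNReal.ofNat_ne_top

end AuxLemmas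


/-- (a) for every `ε > 0` there is an `ε`-optimizer `(Xᵉ, Zᵉ)` of the
reformulated problem with `Zᵉ = −sign(x₀)|Zᵉ| w/|w|`; (b) consequently the reformulated
infimum equals the infimum of `E_μ[U(x₀ + x₀⟨w,X^μ⟩ − |x₀||Z^μ||w|)]`. -/
theorem radial_epsilon_optimizers {d : ℕ} (p k x₀ : ℝ) (hp : 1 ≤ p) (hk : 0 < k)
    (hx₀ : x₀ ≠ 0) (P : Measure (Evec d)) [IsProbabilityMeasure P]
    (hmom : (∫⁻ x, (‖x‖₊ : ℝ≥0∞) ^ p ∂P) < ⊤)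
    (U : ℝ → ℝ) (hU : Monotone U) (hUm : Measurable U)
    (w : Evec d) (hw : w ≠ 0)
    (Ω : Type) [MeasurableSpace Ω] [TopologicalSpace Ω] [PolishSpace Ω] [BorelSpace Ω]
    (μ : Measure Ω) [IsProbabilityMeasure μ] [NullSingletonClass μ] :
    (∀ ε : ℝ, 0 < ε → ∃ X Z : Ω → Evec d,
      Measurable X ∧ Measurable Z ∧ μ.map X = P ∧
      (∫⁻ ω, (‖Z ω‖₊ : ℝ≥0∞) ^ p ∂μ) ^ (1 / p) ≤ ENNReal.ofReal k ∧
      (∀ ω, Z ω = (-(if 0 ≤ x₀ then (1 : ℝ) else -1) * ‖Z ω‖ / ‖w‖) • w) ∧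
      eexp μ (fun ω => U (x₀ + x₀ * (inner ℝ w (X ω + Z ω) : ℝ))) ≤
        (⨅ q : {q : (Ω → Evec d) × (Ω → Evec d) //
            Measurable q.1 ∧ Measurable q.2 ∧ μ.map q.1 = P ∧
            (∫⁻ ω, (‖q.2 ω‖₊ : ℝ≥0∞) ^ p ∂μ) ^ (1 / p) ≤ ENNReal.ofReal k},
          eexp μ (fun ω => U (x₀ + x₀ * (inner ℝ w (q.1.1 ω + q.1.2 ω) : ℝ)))) + (ε : EReal)) ∧
    (⨅ q : {q : (Ω → Evec d) × (Ω → Evec d) //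
        Measurable q.1 ∧ Measurable q.2 ∧ μ.map q.1 = P ∧
        (∫⁻ ω, (‖q.2 ω‖₊ : ℝ≥0∞) ^ p ∂μ) ^ (1 / p) ≤ ENNReal.ofReal k},
      eexp μ (fun ω => U (x₀ + x₀ * (inner ℝ w (q.1.1 ω + q.1.2 ω) : ℝ)))) =
    (⨅ q : {q : (Ω → Evec d) × (Ω → Evec d) //
        Measurable q.1 ∧ Measurable q.2 ∧ μ.map q.1 = P ∧
        (∫⁻ ω, (‖q.2 ω‖₊ : ℝ≥0∞) ^ p ∂μ) ^ (1 / p) ≤ ENNReal.ofReal k},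
      eexp μ (fun ω => U (x₀ + x₀ * (inner ℝ w (q.1.1 ω) : ℝ) - |x₀| * ‖q.1.2 ω‖ * ‖w‖))) := by
  classical
  have hp0 : (0:ℝ) < p := lt_of_lt_of_le one_pos hp
  have hw0 : (0:ℝ) < ‖w‖ := norm_pos_iff.mpr hw
  set s : ℝ := if 0 ≤ x₀ then (1 : ℝ) else -1 with hs
  have hx0s : x₀ * s = |x₀| := by
    rw [hs]
    by_cases h : 0 ≤ x₀
    · rw [if_pos h, abs_of_nonneg h, mul_one]
    · push_neg at h
      rw [if_neg (not_le.mpr h), abs_of_neg h]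
      ring
  have hsabs : |s| = 1 := by
    rw [hs]; split <;> simp
  set rad : (Ω → Evec d) → Ω → Evec d := fun Z ω => (-s * ‖Z ω‖ / ‖w‖) • w with hrad
  have hradnorm : ∀ (Z : Ω → Evec d) (ω : Ω), ‖rad Z ω‖ = ‖Z ω‖ := by
    intro Z ω
    rw [hrad]
    simp only [norm_smul, norm_div, Real.norm_eq_abs, abs_mul, abs_neg, hsabs, one_mul,
      abs_norm]
    field_simp
  have hradnnnorm : ∀ (Z : Ω → Evec d) (ω : Ω), (‖rad Z ω‖₊ : ℝ≥0∞) = (‖Z ω‖₊ : ℝ≥0∞) := by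
    intro Z ω
    congr 1
    ext
    simp only [coe_nnnorm]
    exact hradnorm Z ω
  have hradmeas : ∀ Z : Ω → Evec d, Measurable Z → Measurable (rad Z) := by
    intro Z hZ
    exact (((measurable_norm.comp hZ).const_mul (-s)).div_const ‖w‖).smul_const w
  have hradint : ∀ Z : Ω → Evec d,
      (∫⁻ ω, (‖rad Z ω‖₊ : ℝ≥0∞) ^ p ∂μ) = ∫⁻ ω, (‖Z ω‖₊ : ℝ≥0∞) ^ p ∂μ :=
    fun Z => lintegral_congr fun ω => by rw [hradnnnorm Z ω]
  have hradinner : ∀ (X Z : Ω → Evec d) (ω : Ω),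
      x₀ + x₀ * (inner ℝ w (X ω + rad Z ω) : ℝ) =
        x₀ + x₀ * (inner ℝ w (X ω) : ℝ) - |x₀| * ‖Z ω‖ * ‖w‖ := by
    intro X Z ω
    rw [hrad]
    simp only
    rw [inner_add_right, real_inner_smul_right, real_inner_self_eq_norm_mul_norm]
    have h1 : -s * ‖Z ω‖ / ‖w‖ * (‖w‖ * ‖w‖) = -s * ‖Z ω‖ * ‖w‖ := by
      field_simp
    rw [h1]
    linear_combination (-(‖Z ω‖ * ‖w‖)) * hx0s
  have hradle : ∀ (X Z : Ω → Evec d) (ω : Ω),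
      x₀ + x₀ * (inner ℝ w (X ω) : ℝ) - |x₀| * ‖Z ω‖ * ‖w‖ ≤
        x₀ + x₀ * (inner ℝ w (X ω + Z ω) : ℝ) := by
    intro X Z ω
    rw [inner_add_right, mul_add]
    have habs : |(inner ℝ w (Z ω) : ℝ)| ≤ ‖w‖ * ‖Z ω‖ := abs_real_inner_le_norm w (Z ω)
    have h1 : -(|x₀| * ‖Z ω‖ * ‖w‖) ≤ x₀ * (inner ℝ w (Z ω) : ℝ) := by
      have h2 : |x₀ * (inner ℝ w (Z ω) : ℝ)| ≤ |x₀| * (‖w‖ * ‖Z ω‖) := by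
        rw [abs_mul]
        exact mul_le_mul_of_nonneg_left habs (abs_nonneg x₀)
      have h3 := neg_abs_le (x₀ * (inner ℝ w (Z ω) : ℝ))
      nlinarith [abs_nonneg x₀]
    linarith
  have hradpt : ∀ (X Z : Ω → Evec d) (ω : Ω),
      U (x₀ + x₀ * (inner ℝ w (X ω + rad Z ω) : ℝ)) ≤
        U (x₀ + x₀ * (inner ℝ w (X ω + Z ω) : ℝ)) := by
    intro X Z ω
    exact hU ((hradinner X Z ω).trans_le (hradle X Z ω))
  -- nonemptiness of the index type
  obtain ⟨X0, hX0m, hX0map⟩ := pushforward_exists P μ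
  have hzero : (∫⁻ ω, (‖(fun _ : Ω => (0 : Evec d)) ω‖₊ : ℝ≥0∞) ^ p ∂μ) ^ (1 / p) ≤
      ENNReal.ofReal k := by
    simp only [nnnorm_zero, ENNReal.coe_zero, ENNReal.zero_rpow_of_pos hp0, lintegral_zero,
      ENNReal.zero_rpow_of_pos (one_div_pos.mpr hp0)]
    exact zero_le
  constructor
  · -- part (a)
    intro ε hε
    by_cases hbot : (⨅ q : {q : (Ω → Evec d) × (Ω → Evec d) //
        Measurable q.1 ∧ Measurable q.2 ∧ μ.map q.1 = P ∧
        (∫⁻ ω, (‖q.2 ω‖₊ : ℝ≥0∞) ^ p ∂μ) ^ (1 / p) ≤ ENNReal.ofReal k},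
      eexp μ (fun ω => U (x₀ + x₀ * (inner ℝ w (q.1.1 ω + q.1.2 ω) : ℝ)))) = ⊥
    · -- the infimum is ⊥ : build a countable mixture whose value is ⊥
      rw [iInf_eq_bot] at hbot
      have hseq : ∀ n : ℕ, ∃ q : {q : (Ω → Evec d) × (Ω → Evec d) //
          Measurable q.1 ∧ Measurable q.2 ∧ μ.map q.1 = P ∧
          (∫⁻ ω, (‖q.2 ω‖₊ : ℝ≥0∞) ^ p ∂μ) ^ (1 / p) ≤ ENNReal.ofReal k},
          eexp μ (fun ω => U (x₀ + x₀ * (inner ℝ w (q.1.1 ω + q.1.2 ω) : ℝ))) <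
            ((-(2 ^ (2 * n + 1) : ℝ)) : EReal) := by
        intro n
        exact hbot _ (EReal.bot_lt_coe _)
      choose Q hQ using hseq
      have hpairm : ∀ n, Measurable (fun ω => ((Q n).1.1 ω, (Q n).1.2 ω)) :=
        fun n => ((Q n).2.1).prodMk ((Q n).2.2.1)
      set ρ : Measure (Evec d × Evec d) :=
        Measure.sum (fun n => ((2:ℝ≥0∞)⁻¹)^(n+1) •
          μ.map (fun ω => ((Q n).1.1 ω, (Q n).1.2 ω))) with hρ
      haveI hρprob : IsProbabilityMeasure ρ := by
        constructor
        rw [hρ, Measure.sum_apply _ MeasurableSet.univ]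
        have hterm : ∀ n, (((2:ℝ≥0∞)⁻¹)^(n+1) •
            μ.map (fun ω => ((Q n).1.1 ω, (Q n).1.2 ω))) Set.univ = ((2:ℝ≥0∞)⁻¹)^(n+1) := by
          intro n
          rw [Measure.smul_apply, smul_eq_mul,
            Measure.map_apply (hpairm n) MeasurableSet.univ]
          simp
        simp_rw [hterm]
        exact geom_half_sum
      obtain ⟨W, hWm, hWmap⟩ := pushforward_exists ρ μ
      set X : Ω → Evec d := fun ω => (W ω).1 with hX
      set Z : Ω → Evec d := fun ω => (W ω).2 with hZ
      have hXm : Measurable X := measurable_fst.comp hWm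
      have hZm : Measurable Z := measurable_snd.comp hWm
      -- general lintegral computation for the mixture
      have hlint : ∀ g : Evec d × Evec d → ℝ≥0∞, Measurable g →
          (∫⁻ ω, g (W ω) ∂μ) =
            ∑' n, ((2:ℝ≥0∞)⁻¹)^(n+1) * ∫⁻ ω, g ((Q n).1.1 ω, (Q n).1.2 ω) ∂μ := by
        intro g hg
        rw [← lintegral_map hg hWm, hWmap, hρ, lintegral_sum_measure]
        refine tsum_congr fun n => ?_
        rw [lintegral_smul_measure, lintegral_map hg (hpairm n), smul_eq_mul]
      -- the first marginal is P
      have hXmap : μ.map X = P := by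
        refine Measure.ext fun t ht => ?_
        rw [Measure.map_apply hXm ht]
        have hpre : X ⁻¹' t = W ⁻¹' (Prod.fst ⁻¹' t) := rfl
        rw [hpre, ← Measure.map_apply hWm (measurable_fst ht), hWmap, hρ,
          Measure.sum_apply _ (measurable_fst ht)]
        have hterm : ∀ n, (((2:ℝ≥0∞)⁻¹)^(n+1) •
            μ.map (fun ω => ((Q n).1.1 ω, (Q n).1.2 ω))) (Prod.fst ⁻¹' t) =
              ((2:ℝ≥0∞)⁻¹)^(n+1) * P t := by
          intro n
          rw [Measure.smul_apply, smul_eq_mul,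
            Measure.map_apply (hpairm n) (measurable_fst ht)]
          have : (fun ω => ((Q n).1.1 ω, (Q n).1.2 ω)) ⁻¹' (Prod.fst ⁻¹' t) =
              (Q n).1.1 ⁻¹' t := rfl
          rw [this, ← Measure.map_apply ((Q n).2.1) ht, (Q n).2.2.2.1]
        simp_rw [hterm]
        rw [ENNReal.tsum_mul_right, geom_half_sum, one_mul]
      -- the Lp constraint
      have hZlp : (∫⁻ ω, (‖Z ω‖₊ : ℝ≥0∞) ^ p ∂μ) ^ (1 / p) ≤ ENNReal.ofReal k := by
        rw [rpow_one_div_le_iff hp0]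
        have hg1 : Measurable (fun v : Evec d × Evec d => ((‖v.2‖₊ : ℝ≥0∞)) ^ p) :=
          (measurable_snd.nnnorm.coe_nnreal_ennreal).pow_const p
        have := hlint _ hg1
        simp only at this
        rw [show (∫⁻ ω, (‖Z ω‖₊ : ℝ≥0∞) ^ p ∂μ) = ∫⁻ ω, (‖(W ω).2‖₊ : ℝ≥0∞) ^ p ∂μ from rfl,
          this]
        calc (∑' n, ((2:ℝ≥0∞)⁻¹)^(n+1) * ∫⁻ ω, (‖(Q n).1.2 ω‖₊ : ℝ≥0∞) ^ p ∂μ)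
            ≤ ∑' n, ((2:ℝ≥0∞)⁻¹)^(n+1) * (ENNReal.ofReal k) ^ p := by
              refine ENNReal.tsum_le_tsum fun n => ?_
              exact mul_le_mul_right ((rpow_one_div_le_iff hp0).mp ((Q n).2.2.2.2)) _
        _ = (ENNReal.ofReal k) ^ p := by rw [ENNReal.tsum_mul_right, geom_half_sum, one_mul]
      -- the negative part of the mixture is infinite
      have hg2 : Measurable (fun v : Evec d × Evec d =>
          ENNReal.ofReal (-(U (x₀ + x₀ * (inner ℝ w (v.1 + v.2) : ℝ))))) := by
        have hinner : Measurable (fun v : Evec d × Evec d => (inner ℝ w (v.1 + v.2) : ℝ)) :=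
          ((innerSL ℝ w).continuous.comp (continuous_fst.add continuous_snd)).measurable
        exact ENNReal.measurable_ofReal.comp ((hUm.comp ((hinner.const_mul x₀).const_add x₀)).neg)
      have hbinf : (∫⁻ ω, ENNReal.ofReal (-(U (x₀ + x₀ * (inner ℝ w (X ω + Z ω) : ℝ)))) ∂μ) = ⊤ := by
        have heq := hlint _ hg2
        simp only at heq
        rw [show (∫⁻ ω, ENNReal.ofReal (-(U (x₀ + x₀ * (inner ℝ w (X ω + Z ω) : ℝ)))) ∂μ)
            = ∫⁻ ω, ENNReal.ofReal (-(U (x₀ + x₀ * (inner ℝ w ((W ω).1 + (W ω).2) : ℝ)))) ∂μ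
            from rfl, heq]
        refine ennreal_eq_top_of_pow_le fun n => ?_
        have hbn : ENNReal.ofReal ((2 : ℝ) ^ (2 * n + 1)) ≤
            ∫⁻ ω, ENNReal.ofReal (-(U (x₀ + x₀ * (inner ℝ w ((Q n).1.1 ω + (Q n).1.2 ω) : ℝ)))) ∂μ :=
          neg_part_large_of_eexp_lt (hQ n)
        have hofr : ENNReal.ofReal ((2 : ℝ) ^ (2 * n + 1)) = (2 : ℝ≥0∞) ^ (2 * n + 1) := by
          rw [ENNReal.ofReal_pow (by norm_num : (0:ℝ) ≤ 2)]
          norm_num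
        calc (2:ℝ≥0∞)^n = ((2:ℝ≥0∞)⁻¹)^(n+1) * 2^(2*n+1) := (pow_weight_eq n).symm
        _ ≤ ((2:ℝ≥0∞)⁻¹)^(n+1) *
            ∫⁻ ω, ENNReal.ofReal (-(U (x₀ + x₀ * (inner ℝ w ((Q n).1.1 ω + (Q n).1.2 ω) : ℝ)))) ∂μ := by
              refine mul_le_mul_right ?_ _
              rw [← hofr]
              exact hbn
        _ ≤ _ := ENNReal.le_tsum n
      -- conclude with the radialized mixture
      refine ⟨X, rad Z, hXm, hradmeas Z hZm, hXmap, ?_, ?_, ?_⟩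
      · rw [hradint Z]; exact hZlp
      · intro ω
        rw [hradnorm Z ω]
      · have hbinf' : (∫⁻ ω, ENNReal.ofReal (-(U (x₀ + x₀ * (inner ℝ w (X ω + rad Z ω) : ℝ)))) ∂μ)
            = ⊤ := by
          rw [eq_top_iff, ← hbinf]
          exact lintegral_mono fun ω =>
            ENNReal.ofReal_le_ofReal (neg_le_neg (hradpt X Z ω))
        have hbot' : (⨅ q : {q : (Ω → Evec d) × (Ω → Evec d) //
            Measurable q.1 ∧ Measurable q.2 ∧ μ.map q.1 = P ∧
            (∫⁻ ω, (‖q.2 ω‖₊ : ℝ≥0∞) ^ p ∂μ) ^ (1 / p) ≤ ENNReal.ofReal k},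
          eexp μ (fun ω => U (x₀ + x₀ * (inner ℝ w (q.1.1 ω + q.1.2 ω) : ℝ)))) = ⊥ :=
          iInf_eq_bot.mpr hbot
        rw [hbot', EReal.bot_add]
        exact (eexp_bot μ _ hbinf').le
    · -- the infimum is not ⊥
      obtain ⟨q, hq⟩ : ∃ q : {q : (Ω → Evec d) × (Ω → Evec d) //
          Measurable q.1 ∧ Measurable q.2 ∧ μ.map q.1 = P ∧
          (∫⁻ ω, (‖q.2 ω‖₊ : ℝ≥0∞) ^ p ∂μ) ^ (1 / p) ≤ ENNReal.ofReal k},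
          eexp μ (fun ω => U (x₀ + x₀ * (inner ℝ w (q.1.1 ω + q.1.2 ω) : ℝ))) ≤
            (⨅ q : {q : (Ω → Evec d) × (Ω → Evec d) //
              Measurable q.1 ∧ Measurable q.2 ∧ μ.map q.1 = P ∧
              (∫⁻ ω, (‖q.2 ω‖₊ : ℝ≥0∞) ^ p ∂μ) ^ (1 / p) ≤ ENNReal.ofReal k},
              eexp μ (fun ω => U (x₀ + x₀ * (inner ℝ w (q.1.1 ω + q.1.2 ω) : ℝ)))) + (ε : EReal) := by
        by_cases htop : (⨅ q : {q : (Ω → Evec d) × (Ω → Evec d) //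
            Measurable q.1 ∧ Measurable q.2 ∧ μ.map q.1 = P ∧
            (∫⁻ ω, (‖q.2 ω‖₊ : ℝ≥0∞) ^ p ∂μ) ^ (1 / p) ≤ ENNReal.ofReal k},
          eexp μ (fun ω => U (x₀ + x₀ * (inner ℝ w (q.1.1 ω + q.1.2 ω) : ℝ)))) = ⊤
        · refine ⟨⟨(X0, fun _ => (0 : Evec d)), hX0m, measurable_const, hX0map, hzero⟩, ?_⟩
          rw [htop, EReal.top_add_coe]
          exact le_top
        · have hreal := EReal.coe_toReal htop hbot
          have hlt : (⨅ q : {q : (Ω → Evec d) × (Ω → Evec d) //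
              Measurable q.1 ∧ Measurable q.2 ∧ μ.map q.1 = P ∧
              (∫⁻ ω, (‖q.2 ω‖₊ : ℝ≥0∞) ^ p ∂μ) ^ (1 / p) ≤ ENNReal.ofReal k},
              eexp μ (fun ω => U (x₀ + x₀ * (inner ℝ w (q.1.1 ω + q.1.2 ω) : ℝ)))) <
              (⨅ q : {q : (Ω → Evec d) × (Ω → Evec d) //
              Measurable q.1 ∧ Measurable q.2 ∧ μ.map q.1 = P ∧
              (∫⁻ ω, (‖q.2 ω‖₊ : ℝ≥0∞) ^ p ∂μ) ^ (1 / p) ≤ ENNReal.ofReal k},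
              eexp μ (fun ω => U (x₀ + x₀ * (inner ℝ w (q.1.1 ω + q.1.2 ω) : ℝ)))) + (ε : EReal) := by
            conv_lhs => rw [← hreal]
            conv_rhs => rw [← hreal]
            rw [← EReal.coe_add, EReal.coe_lt_coe_iff]
            linarith
          obtain ⟨q, hq⟩ := iInf_lt_iff.mp hlt
          exact ⟨q, hq.le⟩
      refine ⟨q.1.1, rad q.1.2, q.2.1, hradmeas _ q.2.2.1, q.2.2.2.1, ?_, ?_, ?_⟩
      · rw [hradint q.1.2]; exact q.2.2.2.2
      · intro ω
        rw [hradnorm q.1.2 ω]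
      · exact le_trans (eexp_mono μ (hradpt q.1.1 q.1.2)) hq
  · -- part (b)
    refine le_antisymm (le_iInf fun q => ?_) (le_iInf fun q => ?_)
    · refine iInf_le_of_le
        ⟨(q.1.1, rad q.1.2), q.2.1, hradmeas _ q.2.2.1, q.2.2.2.1,
          by rw [hradint q.1.2]; exact q.2.2.2.2⟩ ?_
      exact le_of_eq (congrArg (eexp μ) (funext fun ω => congrArg U (hradinner q.1.1 q.1.2 ω)))
    · refine le_trans (iInf_le _ q) ?_
      refine le_trans (le_of_eq (congrArg (eexp μ)
        (funext fun ω => congrArg U (hradinner q.1.1 q.1.2 ω))).symm) ?_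
      exact eexp_mono μ (hradpt q.1.1 q.1.2)
end
end
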